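/- arXiv:1805.02992 — 8 statements merged into one kernel-verified Lean document; each statement's English description precedes it below -/
import Mathlib

section
/- Let 0 < p ≤ 1 and let 𝓗 be a class of continuous multilinear operators between Banach spaces equipped with a p-norm ‖·‖_𝓗 on each component, closed under permutation of arguments with ‖A_σ‖_𝓗 = ‖A‖_𝓗 for every permutation σ (strongly symmetric). For an n-homogeneous polynomial P with symmetric associated multilinear map P̌ ∈ 𝓗, define ‖P‖_{𝓟_𝓗} = ‖P̌‖_𝓗 and ‖P‖_{𝓟^𝓗} = inf{‖A‖_𝓗 : A ∈ 𝓗, Â = P}. Then ‖P‖_{𝓟^𝓗} ≤ ‖P‖_{𝓟_𝓗} ≤ (n!)^{1/p − 1}·‖P‖_{𝓟^𝓗}. -/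
lemma neg_one_pow_sub_aux {𝕜 : Type*} [Field 𝕜] {m u : ℕ} (h : u ≤ m) :
    (-1 : 𝕜) ^ (m - u) = (-1) ^ m * (-1) ^ u := by
  rw [← pow_add]
  have h2 : m + u = (m - u) + 2 * u := by omega
  rw [h2, pow_add, pow_mul, neg_one_sq, one_pow, mul_one]

open Finset in
/-- inclusion-exclusion coefficient -/
lemma coeff_aux {𝕜 : Type*} [Field 𝕜] {n : ℕ} (r : Fin n → Fin n) :
    (∑ S : Finset (Fin n), if (∀ i, r i ∈ S) then ((-1 : 𝕜) ^ (n - S.card)) else 0)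
      = if Function.Bijective r then 1 else 0 := by
  classical
  set T : Finset (Fin n) := Finset.image r Finset.univ with hT
  have hcond : ∀ S : Finset (Fin n), (∀ i, r i ∈ S) ↔ T ⊆ S := by
    intro S
    rw [hT, Finset.image_subset_iff]
    simp
  have h1 : (∑ S : Finset (Fin n), if (∀ i, r i ∈ S) then ((-1 : 𝕜) ^ (n - S.card)) else 0)
      = ∑ S ∈ Finset.univ.filter (fun S => T ⊆ S), (-1 : 𝕜) ^ (n - S.card) := by
    rw [Finset.sum_filter]
    exact Finset.sum_congr rfl fun S _ => if_congr (hcond S) rfl rfl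
  have h2 : ∑ S ∈ Finset.univ.filter (fun S => T ⊆ S), (-1 : 𝕜) ^ (n - S.card)
      = ∑ U ∈ Tᶜ.powerset, (-1 : 𝕜) ^ (Tᶜ.card - U.card) := by
    refine Finset.sum_nbij' (fun S => S \ T) (fun U => T ∪ U) ?_ ?_ ?_ ?_ ?_
    · intro S hS
      rw [Finset.mem_powerset]
      intro a ha
      rw [Finset.mem_sdiff] at ha
      simp [ha.2]
    · intro U hU
      simp only [Finset.mem_filter, Finset.mem_univ, true_and]
      exact Finset.subset_union_left
    · intro S hS
      rw [Finset.mem_filter] at hS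
      exact Finset.union_sdiff_of_subset hS.2
    · intro U hU
      rw [Finset.mem_powerset] at hU
      refine Finset.union_sdiff_cancel_left ?_
      exact Finset.disjoint_left.mpr fun a haT haU => by
        have := hU haU; simp [Finset.mem_compl, haT] at this
    · intro S hS
      rw [Finset.mem_filter] at hS
      congr 1
      have hc1 : T.card ≤ S.card := Finset.card_le_card hS.2
      have hc2 : (S \ T).card = S.card - T.card := Finset.card_sdiff_of_subset hS.2
      have hc3 : Tᶜ.card = n - T.card := by
        rw [Finset.card_compl, Fintype.card_fin]
      have hc4 : S.card ≤ n := by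
        simpa using Finset.card_le_card (Finset.subset_univ S)
      simp only [hc2, hc3]
      omega
  have h3 : ∑ U ∈ Tᶜ.powerset, (-1 : 𝕜) ^ (Tᶜ.card - U.card)
      = (-1 : 𝕜) ^ Tᶜ.card * (if Tᶜ = ∅ then 1 else 0) := by
    have : ∀ U ∈ Tᶜ.powerset, (-1 : 𝕜) ^ (Tᶜ.card - U.card)
        = (-1 : 𝕜) ^ Tᶜ.card * (-1) ^ U.card := fun U hU =>
      neg_one_pow_sub_aux (Finset.card_le_card (Finset.mem_powerset.mp hU))
    rw [Finset.sum_congr rfl this, ← Finset.mul_sum]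
    congr 1
    have := Finset.sum_powerset_neg_one_pow_card (x := Tᶜ)
    calc (∑ U ∈ Tᶜ.powerset, (-1 : 𝕜) ^ U.card)
        = ((∑ U ∈ Tᶜ.powerset, (-1 : ℤ) ^ U.card : ℤ) : 𝕜) := by push_cast; rfl
      _ = _ := by rw [this]; split <;> simp
  have hbij : Function.Bijective r ↔ Tᶜ = ∅ := by
    rw [Finset.compl_eq_empty_iff]
    constructor
    · intro h; exact Finset.image_univ_of_surjective h.surjective
    · intro h
      have hsurj : Function.Surjective r := by
        intro y
        have : y ∈ T := h ▸ Finset.mem_univ y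
        rcases Finset.mem_image.mp this with ⟨x, _, hx⟩
        exact ⟨x, hx⟩
      exact Finite.surjective_iff_bijective.mp hsurj
  rw [h1, h2, h3]
  by_cases hb : Function.Bijective r
  · rw [if_pos (hbij.mp hb), if_pos hb, hbij.mp hb]
    simp
  · rw [if_neg (fun h => hb (hbij.mpr h)), if_neg hb, mul_zero]

open Finset in
lemma polar_aux {𝕜 E F : Type*} [RCLike 𝕜]
    [NormedAddCommGroup E] [NormedSpace 𝕜 E]
    [NormedAddCommGroup F] [NormedSpace 𝕜 F] {n : ℕ}
    (A : ContinuousMultilinearMap 𝕜 (fun _ : Fin n => E) F) (x : Fin n → E) :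
    ∑ S : Finset (Fin n), ((-1 : 𝕜) ^ (n - S.card)) • A (fun _ => ∑ i ∈ S, x i)
      = ∑ σ : Equiv.Perm (Fin n), A (fun i => x (σ i)) := by
  classical
  have expand : ∀ S : Finset (Fin n), A (fun _ => ∑ i ∈ S, x i)
      = ∑ r ∈ Fintype.piFinset (fun _ : Fin n => S), A (fun i => x (r i)) :=
    fun S => A.toMultilinearMap.map_sum_finset (fun _ j => x j) (fun _ => S)
  have hpi : ∀ S : Finset (Fin n), Fintype.piFinset (fun _ : Fin n => S)
      = Finset.univ.filter (fun r : Fin n → Fin n => ∀ i, r i ∈ S) := by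
    intro S; ext r; simp [Fintype.mem_piFinset]
  calc ∑ S : Finset (Fin n), ((-1 : 𝕜) ^ (n - S.card)) • A (fun _ => ∑ i ∈ S, x i)
      = ∑ S : Finset (Fin n), ∑ r : Fin n → Fin n,
          (if (∀ i, r i ∈ S) then ((-1 : 𝕜) ^ (n - S.card)) else 0) • A (fun i => x (r i)) := by
        refine Finset.sum_congr rfl fun S _ => ?_
        rw [expand S, Finset.smul_sum, hpi S, Finset.sum_filter]
        exact Finset.sum_congr rfl fun r _ => by split <;> simp
    _ = ∑ r : Fin n → Fin n, ∑ S : Finset (Fin n),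
          (if (∀ i, r i ∈ S) then ((-1 : 𝕜) ^ (n - S.card)) else 0) • A (fun i => x (r i)) :=
        Finset.sum_comm
    _ = ∑ r : Fin n → Fin n,
          (if Function.Bijective r then (1 : 𝕜) else 0) • A (fun i => x (r i)) := by
        refine Finset.sum_congr rfl fun r _ => ?_
        rw [← Finset.sum_smul, coeff_aux r]
    _ = ∑ r ∈ Finset.univ.filter (fun r : Fin n → Fin n => Function.Bijective r),
          A (fun i => x (r i)) := by
        rw [Finset.sum_filter]
        exact Finset.sum_congr rfl fun r _ => by split <;> simp
    _ = ∑ σ : Equiv.Perm (Fin n), A (fun i => x (σ i)) := by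
        symm
        refine Finset.sum_bij (fun σ _ => (σ : Fin n → Fin n)) ?_ ?_ ?_ ?_
        · intro σ _; exact Finset.mem_filter.mpr ⟨Finset.mem_univ _, σ.bijective⟩
        · intro σ _ τ _ h; exact Equiv.coe_fn_injective h
        · intro r hr
          have hb : Function.Bijective r := (Finset.mem_filter.mp hr).2
          exact ⟨Equiv.ofBijective r hb, Finset.mem_univ _, rfl⟩
        · intro σ _; rfl

/-- Let `0 < p ≤ 1` and let `𝓗` (the component at `(^nE;F)` being the set `S`
with `p`-norm `N`) be strongly symmetric. For an `n`-homogeneous polynomial `P` whose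
associated symmetric multilinear map `Psym = P̌` belongs to `𝓗`, one has
`‖P‖_{𝓟^𝓗} ≤ ‖P‖_{𝓟_𝓗} ≤ (n!)^{1/p - 1} ‖P‖_{𝓟^𝓗}`, where `‖P‖_{𝓟_𝓗} = ‖P̌‖_𝓗` and
`‖P‖_{𝓟^𝓗} = inf {‖A‖_𝓗 : A ∈ 𝓗, Â = P}`. -/
theorem stmt1 {𝕜 E F : Type*} [RCLike 𝕜]
    [NormedAddCommGroup E] [NormedSpace 𝕜 E] [CompleteSpace E]
    [NormedAddCommGroup F] [NormedSpace 𝕜 F] [CompleteSpace F]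
    (n : ℕ) (p : ℝ) (hp0 : 0 < p) (hp1 : p ≤ 1)
    (S : Set (ContinuousMultilinearMap 𝕜 (fun _ : Fin n => E) F))
    (N : ContinuousMultilinearMap 𝕜 (fun _ : Fin n => E) F → ℝ)
    -- `S` is a linear subspace and `N` is a `p`-norm on it:
    (hNnonneg : ∀ A, 0 ≤ N A)
    (hadd : ∀ A B₁, A ∈ S → B₁ ∈ S → A + B₁ ∈ S)
    (hsmulmem : ∀ (c : 𝕜) A, A ∈ S → c • A ∈ S)
    (hptri : ∀ A B₁, A ∈ S → B₁ ∈ S → (N (A + B₁)) ^ p ≤ (N A) ^ p + (N B₁) ^ p)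
    (hsmul : ∀ (c : 𝕜) A, N (c • A) = ‖c‖ * N A)
    -- strong symmetry of `𝓗`:
    (hsymm : ∀ (σ : Equiv.Perm (Fin n)) A, A ∈ S →
      A.domDomCongr σ ∈ S ∧ N (A.domDomCongr σ) = N A)
    -- `Psym = P̌` is the symmetric multilinear map associated to `P`, and `P̌ ∈ 𝓗`:
    (Psym : ContinuousMultilinearMap 𝕜 (fun _ : Fin n => E) F)
    (hPsym : ∀ (σ : Equiv.Perm (Fin n)) (v : Fin n → E), Psym (fun i => v (σ i)) = Psym v)
    (hPS : Psym ∈ S) :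
    sInf {r : ℝ | ∃ A ∈ S, (∀ x : E, A (fun _ => x) = Psym (fun _ => x)) ∧ r = N A}
        ≤ N Psym ∧
      N Psym ≤ (n.factorial : ℝ) ^ (1 / p - 1) *
        sInf {r : ℝ | ∃ A ∈ S, (∀ x : E, A (fun _ => x) = Psym (fun _ => x)) ∧ r = N A} := by
  classical
  set T := {r : ℝ | ∃ A ∈ S, (∀ x : E, A (fun _ => x) = Psym (fun _ => x)) ∧ r = N A} with hTdef
  have hmem : N Psym ∈ T := ⟨Psym, hPS, fun _ => rfl, rfl⟩
  have hbdd : BddBelow T := ⟨0, fun r ⟨A, _, _, hr⟩ => hr ▸ hNnonneg A⟩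
  have hne : T.Nonempty := ⟨_, hmem⟩
  refine ⟨csInf_le hbdd hmem, ?_⟩
  -- basic facts
  have h0S : (0 : ContinuousMultilinearMap 𝕜 (fun _ : Fin n => E) F) ∈ S := by
    simpa using hsmulmem 0 Psym hPS
  have hN0 : N 0 = 0 := by
    have := hsmul 0 Psym
    simpa using this
  -- p-subadditivity for finite sums
  have hsum : ∀ {ι : Type} (t : Finset ι)
      (f : ι → ContinuousMultilinearMap 𝕜 (fun _ : Fin n => E) F),
      (∀ i ∈ t, f i ∈ S) → ((∑ i ∈ t, f i) ∈ S ∧ N (∑ i ∈ t, f i) ^ p ≤ ∑ i ∈ t, N (f i) ^ p) := by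
    intro ι t f hf
    induction t using Finset.cons_induction with
    | empty => simp [hN0, Real.zero_rpow (ne_of_gt hp0), h0S]
    | cons a t ha ih =>
      have hfa : f a ∈ S := hf a (Finset.mem_cons_self a t)
      obtain ⟨hmemS, hle⟩ := ih (fun i hi => hf i (Finset.mem_cons_of_mem hi))
      rw [Finset.sum_cons, Finset.sum_cons]
      refine ⟨hadd _ _ hfa hmemS, ?_⟩
      calc N (f a + ∑ i ∈ t, f i) ^ p ≤ N (f a) ^ p + N (∑ i ∈ t, f i) ^ p :=
            hptri _ _ hfa hmemS
        _ ≤ N (f a) ^ p + ∑ i ∈ t, N (f i) ^ p := by linarith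
  -- the key bound
  set K : ℝ := (n.factorial : ℝ) ^ (1 / p - 1) with hKdef
  have hKpos : 0 < K := Real.rpow_pos_of_pos (by positivity) _
  have hkey : ∀ r ∈ T, N Psym ≤ K * r := by
    rintro r ⟨A, hAS, hAdiag, rfl⟩
    -- polarization: Psym = (n!)⁻¹ • ∑ σ, A.domDomCongr σ
    have hfac_ne : ((n.factorial : 𝕜)) ≠ 0 := Nat.cast_ne_zero.mpr n.factorial_ne_zero
    have hsum_eq : (∑ σ : Equiv.Perm (Fin n), A.domDomCongr σ) = (n.factorial : 𝕜) • Psym := by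
      ext v
      have h1 : (∑ σ : Equiv.Perm (Fin n), A.domDomCongr σ) v
          = ∑ σ : Equiv.Perm (Fin n), A (fun i => v (σ i)) := by
        induction (Finset.univ : Finset (Equiv.Perm (Fin n))) using Finset.cons_induction with
        | empty => simp
        | cons a t ha ih => simp_all [ContinuousMultilinearMap.add_apply]
      rw [h1, ← polar_aux A v]
      have h2 : ∀ S₀ : Finset (Fin n), A (fun _ => ∑ i ∈ S₀, v i) = Psym (fun _ => ∑ i ∈ S₀, v i) :=
        fun S₀ => hAdiag _
      rw [Finset.sum_congr rfl fun S₀ _ => by rw [h2 S₀], polar_aux Psym v]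
      rw [Finset.sum_congr rfl fun σ _ => hPsym σ v, Finset.sum_const, Finset.card_univ,
        Fintype.card_perm, Fintype.card_fin]
      simp [ContinuousMultilinearMap.smul_apply, Nat.cast_smul_eq_nsmul]
    have hP_eq : Psym = ((n.factorial : 𝕜))⁻¹ • ∑ σ : Equiv.Perm (Fin n), A.domDomCongr σ := by
      rw [hsum_eq, smul_smul, inv_mul_cancel₀ hfac_ne, one_smul]
    -- membership and p-norm estimate for the sum
    obtain ⟨hBS, hBle⟩ := hsum Finset.univ (fun σ : Equiv.Perm (Fin n) => A.domDomCongr σ)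
      (fun σ _ => (hsymm σ A hAS).1)
    have hBle' : N (∑ σ : Equiv.Perm (Fin n), A.domDomCongr σ) ^ p
        ≤ (n.factorial : ℝ) * N A ^ p := by
      refine hBle.trans_eq ?_
      rw [Finset.sum_congr rfl fun σ _ => by rw [(hsymm σ A hAS).2], Finset.sum_const,
        Finset.card_univ, Fintype.card_perm, Fintype.card_fin, nsmul_eq_mul]
    -- compute N Psym
    have hNP : N Psym = ((n.factorial : ℝ))⁻¹ * N (∑ σ : Equiv.Perm (Fin n), A.domDomCongr σ) := by
      rw [hP_eq] at *
      rw [hsmul, norm_inv, RCLike.norm_natCast]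
    have hfacR : (0:ℝ) < (n.factorial : ℝ) := by positivity
    have hNB0 : 0 ≤ N (∑ σ : Equiv.Perm (Fin n), A.domDomCongr σ) := hNnonneg _
    -- raise to power p
    have hKp : K ^ p = (n.factorial : ℝ) ^ (1 - p) := by
      rw [hKdef, ← Real.rpow_mul (le_of_lt hfacR)]
      congr 1
      field_simp
    have hNPp : N Psym ^ p ≤ (K * N A) ^ p := by
      rw [hNP, Real.mul_rpow (by positivity) hNB0,
        Real.mul_rpow (le_of_lt hKpos) (hNnonneg A), hKp, Real.inv_rpow (le_of_lt hfacR)]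
      calc ((n.factorial : ℝ) ^ p)⁻¹ * N (∑ σ : Equiv.Perm (Fin n), A.domDomCongr σ) ^ p
          ≤ ((n.factorial : ℝ) ^ p)⁻¹ * ((n.factorial : ℝ) * N A ^ p) :=
            mul_le_mul_of_nonneg_left hBle' (by positivity)
        _ = (((n.factorial : ℝ) ^ p)⁻¹ * (n.factorial : ℝ)) * N A ^ p := by ring
        _ = (n.factorial : ℝ) ^ (1 - p) * N A ^ p := by
            congr 1
            rw [show (1 : ℝ) - p = -p + 1 by ring, Real.rpow_add hfacR, Real.rpow_one,
              Real.rpow_neg (le_of_lt hfacR)]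
    exact (Real.rpow_le_rpow_iff (hNnonneg Psym)
      (mul_nonneg (le_of_lt hKpos) (hNnonneg A)) hp0).mp hNPp
  have hdiv : N Psym / K ≤ sInf T :=
    le_csInf hne fun r hr => (div_le_iff₀' hKpos).mpr (hkey r hr)
  calc N Psym = K * (N Psym / K) := by field_simp
    _ ≤ K * sInf T := by
      exact mul_le_mul_of_nonneg_left hdiv (le_of_lt hKpos)
end

section
/- Let 𝓗 be a normed multilinear hyper-ideal: a class of continuous multilinear maps between Banach spaces with a norm such that if A ∈ 𝓗(E_1,...,E_n;F), B_i ∈ 𝓛(G_1^i,...,G_{m_i}^i;E_i) are continuous multilinear maps, and t ∈ 𝓛(F;H) is a bounded linear operator, then t∘A∘(B_1,...,B_n) ∈ 𝓗 with ‖t∘A∘(B_1,...,B_n)‖_𝓗 ≤ ‖t‖·‖A‖_𝓗·‖B_1‖⋯‖B_n‖. Define 𝓟^𝓗(^nE;F) = {P : ∃ A ∈ 𝓗(^nE;F) with Â = P} with ‖P‖_{𝓟^𝓗} = inf{‖A‖_𝓗 : Â = P}. Then for every t ∈ 𝓛(F;H), Q ∈ 𝓟^𝓗(^nE;F) and every continuous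 m-homogeneous polynomial R : G → E, the composition t∘Q∘R belongs to 𝓟^𝓗(^{mn}G;H) and ‖t∘Q∘R‖_{𝓟^𝓗} ≤ (m^m/m!)^n·‖t‖·‖Q‖_{𝓟^𝓗}·‖R‖^n. -/
/-!
Replace a representative `B` of `R` by its symmetrization `Ř`, which represents `R` as well.
By the polarization formula
`2ᵐ m! Ř(x₁, …, xₘ) = ∑_{ε ∈ {±1}ᵐ} ε₁⋯εₘ R(ε₁x₁ + ⋯ + εₘxₘ)`
and the homogeneity bound `‖R y‖ ≤ ‖y‖ᵐ ‖R‖`, we get `‖Ř‖ ≤ (mᵐ / m!) ‖R‖`. For every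
representative `A ∈ 𝓗` of `Q`, the map `t ∘ A ∘ (Ř, …, Ř)` represents `t ∘ Q ∘ R`, and the
hyper-ideal inequality bounds its norm by `‖t‖ ‖A‖_𝓗 ‖Ř‖ⁿ`; take the infimum over `A`.
-/

open Metric Finset Function Equiv

namespace ContinuousMultilinearMap

variable {R ι : Type*} {M : ι → Type*} {β : ι → Type*} {N : (i : ι) → β i → Type*} {P : Type*}
  [Semiring R] [∀ i, AddCommMonoid (M i)] [∀ i, Module R (M i)] [∀ i, TopologicalSpace (M i)]
  [∀ i b, AddCommMonoid (N i b)] [∀ i b, Module R (N i b)] [∀ i b, TopologicalSpace (N i b)]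
  [AddCommMonoid P] [Module R P] [TopologicalSpace P]

def compContinuousMultilinearMap (g : ContinuousMultilinearMap R M P)
    (f : ∀ i, ContinuousMultilinearMap R (N i) (M i)) :
    ContinuousMultilinearMap R (fun j : Σ i, β i => N j.1 j.2) P where
  toMultilinearMap := g.toMultilinearMap.compMultilinearMap fun i => (f i).toMultilinearMap
  cont := g.cont.comp <| continuous_pi fun i => (f i).cont.comp <|
    continuous_pi fun b => continuous_apply (⟨i, b⟩ : Σ i, β i)

end ContinuousMultilinearMap

section SignSums

variable {ι : Type*} [Fintype ι] [DecidableEq ι]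

theorem sum_units_int_prod_mul_prod_perm (σ : Perm ι) :
    ∑ ε : ι → ℤˣ, (((∏ i, ε i) * ∏ i, ε (σ i) : ℤˣ) : ℤ) = 2 ^ Fintype.card ι := by
  simp only [Equiv.prod_comp σ, Int.units_mul_self, Units.val_one, sum_const, card_univ,
    Fintype.card_fun, Fintype.card_units_int, nsmul_eq_mul, mul_one]
  norm_cast

theorem sum_units_int_prod_mul_prod_comp_eq_zero {g : ι → ι} {j : ι} (hj : ∀ i, g i ≠ j) :
    ∑ ε : ι → ℤˣ, (((∏ i, ε i) * ∏ i, ε (g i) : ℤˣ) : ℤ) = 0 := by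
  -- Flipping the sign of `ε j` negates every summand, as `j` is not in the range of `g`.
  set δ : ι → ℤˣ := Pi.mulSingle j (-1)
  have hflip : ∀ ε : ι → ℤˣ, (((∏ i, (δ * ε) i) * ∏ i, (δ * ε) (g i) : ℤˣ) : ℤ)
      = -(((∏ i, ε i) * ∏ i, ε (g i) : ℤˣ) : ℤ) := by
    intro ε
    have hδ : ∀ i, δ (g i) = 1 := fun i => Pi.mulSingle_eq_of_ne (hj i) _
    simp only [Pi.mul_apply, prod_mul_distrib, hδ, one_mul, δ,
      prod_pi_mulSingle', mem_univ, if_true]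
    push_cast
    ring
  have hsum := Equiv.sum_comp (Equiv.mulLeft δ)
    fun ε : ι → ℤˣ => (((∏ i, ε i) * ∏ i, ε (g i) : ℤˣ) : ℤ)
  simp only [coe_mulLeft, hflip, sum_neg_distrib] at hsum
  omega

end SignSums

namespace MultilinearMap

variable {R ι M N : Type*} [CommRing R] [AddCommGroup M] [Module R M] [AddCommGroup N] [Module R N]
  [Fintype ι]

theorem map_units_int_smul_univ {M₁ : ι → Type*} [∀ i, AddCommGroup (M₁ i)]
    [∀ i, Module R (M₁ i)] (f : MultilinearMap R M₁ N) (ε : ι → ℤˣ) (x : ∀ i, M₁ i) :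
    f (fun i => ε i • x i) = (∏ i, ε i) • f x := by
  simp only [Units.smul_def, ← Int.cast_smul_eq_zsmul R, f.map_smul_univ]
  push_cast
  rfl

theorem sum_units_int_smul_apply_sum [DecidableEq ι] (f : MultilinearMap R (fun _ : ι => M) N)
    (x : ι → M) :
    ∑ ε : ι → ℤˣ, (∏ i, ε i) • f (fun _ => ∑ j, ε j • x j) =
      2 ^ Fintype.card ι • ∑ σ : Perm ι, f (fun i => x (σ i)) := by
  have expand (ε : ι → ℤˣ) :
      f (fun _ => ∑ j, ε j • x j) = ∑ g : ι → ι, (∏ i, ε (g i)) • f (x ∘ g) := by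
    rw [f.map_sum]
    exact sum_congr rfl fun g _ => f.map_units_int_smul_univ (ε ∘ g) (x ∘ g)
  calc ∑ ε : ι → ℤˣ, (∏ i, ε i) • f (fun _ => ∑ j, ε j • x j)
      = ∑ g : ι → ι, (∑ ε : ι → ℤˣ, (((∏ i, ε i) * ∏ i, ε (g i) : ℤˣ) : ℤ)) • f (x ∘ g) := by
        simp only [expand, smul_sum, sum_smul, ← Units.smul_def, mul_smul]
        exact sum_comm
    _ = ∑ σ : Perm ι, (2 ^ Fintype.card ι : ℤ) • f (x ∘ σ) := by
        rw [← sum_subset (subset_univ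
          ((univ : Finset (Perm ι)).map ⟨_, DFunLike.coe_injective⟩)), sum_map]
        · simp only [Embedding.coeFn_mk, sum_units_int_prod_mul_prod_perm]
        · intro g _ hg
          obtain ⟨j, hj⟩ : ∃ j, ∀ i, g i ≠ j := by
            by_contra! hsurj
            exact hg (mem_map.2 ⟨ofBijective g (Finite.surjective_iff_bijective.1 hsurj),
              mem_univ _, rfl⟩)
          rw [sum_units_int_prod_mul_prod_comp_eq_zero hj, zero_smul]
    _ = 2 ^ Fintype.card ι • ∑ σ : Perm ι, f (fun i => x (σ i)) := by
        rw [← smul_sum, ← natCast_zsmul]; push_cast; rfl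

end MultilinearMap

namespace ContinuousMultilinearMap

variable {𝕜 ι : Type*} [RCLike 𝕜] [Fintype ι] {G F : Type*}
  [NormedAddCommGroup G] [NormedSpace 𝕜 G] [NormedAddCommGroup F] [NormedSpace 𝕜 F]

theorem opNorm_le_of_forall_norm_le_one {E : ι → Type*} [∀ i, NormedAddCommGroup (E i)]
    [∀ i, NormedSpace 𝕜 (E i)] (f : ContinuousMultilinearMap 𝕜 E F) {C : ℝ}
    (h : ∀ v : ∀ i, E i, (∀ i, ‖v i‖ ≤ 1) → ‖f v‖ ≤ C) : ‖f‖ ≤ C := by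
  have hC : 0 ≤ C := (norm_nonneg _).trans (h 0 fun i => by simp)
  refine opNorm_le_bound hC fun v => ?_
  by_cases hv : ∀ i, v i ≠ 0
  swap
  · obtain ⟨i, hi⟩ := not_forall_not.1 hv
    rw [f.map_coord_zero i hi, norm_zero]
    exact mul_nonneg hC (prod_nonneg fun i _ => norm_nonneg _)
  set u : ∀ i, E i := fun i => ((‖v i‖ : 𝕜))⁻¹ • v i
  have hvu : v = fun i => (‖v i‖ : 𝕜) • u i :=
    funext fun i => (smul_inv_smul₀ (by simpa using hv i) _).symm
  calc ‖f v‖ = (∏ i, ‖v i‖) * ‖f u‖ := by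
        conv_lhs => rw [hvu]
        simp [f.map_smul_univ, norm_smul, norm_prod]
    _ ≤ (∏ i, ‖v i‖) * C := by
        gcongr
        exact h u fun i => (norm_smul_inv_norm (hv i)).le
    _ = C * ∏ i, ‖v i‖ := mul_comm _ _

theorem norm_apply_const_le (f : ContinuousMultilinearMap 𝕜 (fun _ : ι => G) F) {M : ℝ}
    (hM : ∀ x : G, ‖x‖ ≤ 1 → ‖f (fun _ => x)‖ ≤ M) (y : G) :
    ‖f (fun _ => y)‖ ≤ ‖y‖ ^ Fintype.card ι * M := by
  set u : G := ((‖y‖ : 𝕜))⁻¹ • y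
  have hu : ‖u‖ ≤ 1 := by
    rcases eq_or_ne y 0 with rfl | hy
    · simp [u]
    · exact (norm_smul_inv_norm hy).le
  have hyu : y = (‖y‖ : 𝕜) • u := by
    rcases eq_or_ne y 0 with rfl | hy
    · simp
    · exact (smul_inv_smul₀ (by simpa using hy) y).symm
  calc ‖f (fun _ => y)‖ = ‖y‖ ^ Fintype.card ι * ‖f (fun _ => u)‖ := by
        conv_lhs => rw [hyu]
        simp [f.map_smul_univ (fun _ => (‖y‖ : 𝕜)) (fun _ => u), norm_smul]
    _ ≤ ‖y‖ ^ Fintype.card ι * M := by gcongr; exact hM u hu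

theorem norm_apply_const_le_sSup (f : ContinuousMultilinearMap 𝕜 (fun _ : ι => G) F) {x : G}
    (hx : ‖x‖ ≤ 1) :
    ‖f (fun _ => x)‖ ≤ sSup {r | ∃ y ∈ closedBall (0 : G) 1, r = ‖f (fun _ => y)‖} := by
  refine le_csSup ⟨‖f‖, ?_⟩ ⟨x, mem_closedBall_zero_iff.2 hx, rfl⟩
  rintro _ ⟨y, hy, rfl⟩
  exact f.unit_le_opNorm ((pi_norm_const_le y).trans (mem_closedBall_zero_iff.1 hy))

variable [DecidableEq ι]

noncomputable def symmetrize (f : ContinuousMultilinearMap 𝕜 (fun _ : ι => G) F) :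
    ContinuousMultilinearMap 𝕜 (fun _ : ι => G) F :=
  ((Fintype.card ι).factorial : 𝕜)⁻¹ • ∑ σ : Perm ι, f.domDomCongr σ

theorem symmetrize_apply (f : ContinuousMultilinearMap 𝕜 (fun _ : ι => G) F) (v : ι → G) :
    f.symmetrize v = ((Fintype.card ι).factorial : 𝕜)⁻¹ • ∑ σ : Perm ι, f (fun i => v (σ i)) := by
  simp [symmetrize]

theorem symmetrize_apply_const (f : ContinuousMultilinearMap 𝕜 (fun _ : ι => G) F) (x : G) :
    f.symmetrize (fun _ => x) = f (fun _ => x) := by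
  rw [symmetrize_apply]
  simp [Fintype.card_perm, ← Nat.cast_smul_eq_nsmul 𝕜, smul_smul, Nat.factorial_ne_zero]

theorem norm_symmetrize_le (f : ContinuousMultilinearMap 𝕜 (fun _ : ι => G) F) {M : ℝ}
    (hM : ∀ x : G, ‖x‖ ≤ 1 → ‖f (fun _ => x)‖ ≤ M) :
    ‖f.symmetrize‖ ≤
      ((Fintype.card ι : ℝ) ^ Fintype.card ι / (Fintype.card ι).factorial) * M := by
  set m := Fintype.card ι
  have hM0 : 0 ≤ M := (norm_nonneg _).trans (hM 0 (by simp))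
  refine opNorm_le_of_forall_norm_le_one _ fun v hv => ?_
  have hterm (ε : ι → ℤˣ) : ‖f (fun _ => ∑ j, ε j • v j)‖ ≤ m ^ m * M := by
    have hsum : ‖∑ j, ε j • v j‖ ≤ m :=
      calc ‖∑ j, ε j • v j‖ ≤ ∑ j, ‖ε j • v j‖ := norm_sum_le _ _
        _ ≤ ∑ _j : ι, (1 : ℝ) := sum_le_sum fun j _ => (norm_units_zsmul _ _).trans_le (hv j)
        _ = m := by simp [m]
    exact (f.norm_apply_const_le hM _).trans (by gcongr)
  have hpolar : (2 : ℝ) ^ m * ‖∑ σ : Perm ι, f (fun i => v (σ i))‖ ≤ 2 ^ m * (m ^ m * M) := by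
    calc (2 : ℝ) ^ m * ‖∑ σ : Perm ι, f (fun i => v (σ i))‖
        = ‖2 ^ m • ∑ σ : Perm ι, f (fun i => v (σ i))‖ := by simp [RCLike.norm_nsmul 𝕜]
      _ = ‖∑ ε : ι → ℤˣ, (∏ i, ε i) • f (fun _ => ∑ j, ε j • v j)‖ :=
        congrArg norm (f.toMultilinearMap.sum_units_int_smul_apply_sum v).symm
      _ ≤ ∑ ε : ι → ℤˣ, ‖f (fun _ => ∑ j, ε j • v j)‖ :=
        (norm_sum_le _ _).trans_eq (sum_congr rfl fun ε _ => norm_units_zsmul _ _)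
      _ ≤ ∑ _ε : ι → ℤˣ, (m : ℝ) ^ m * M := sum_le_sum fun ε _ => hterm ε
      _ = 2 ^ m * (m ^ m * M) := by simp [m, Fintype.card_units_int]
  rw [symmetrize_apply, norm_smul, norm_inv, RCLike.norm_natCast, div_mul_eq_mul_div,
    inv_mul_eq_div]
  gcongr
  exact le_of_mul_le_mul_left hpolar (by positivity)

end ContinuousMultilinearMap

theorem Real.sInf_le_mul_sInf {s t : Set ℝ} {c : ℝ} (hs : BddBelow s) (ht : t.Nonempty)
    (hc : 0 ≤ c) (h : ∀ a ∈ t, ∃ b ∈ s, b ≤ c * a) : sInf s ≤ c * sInf t := by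
  rw [← smul_eq_mul, ← Real.sInf_smul_of_nonneg hc]
  refine le_csInf ht.smul_set ?_
  rintro _ ⟨a, ha, rfl⟩
  obtain ⟨b, hb, hba⟩ := h a ha
  exact (csInf_le hs hb).trans hba

theorem stmt2_general {𝕜 E F G H : Type*} [RCLike 𝕜]
    [NormedAddCommGroup E] [NormedSpace 𝕜 E]
    [NormedAddCommGroup F] [NormedSpace 𝕜 F]
    [NormedAddCommGroup G] [NormedSpace 𝕜 G]
    [NormedAddCommGroup H] [NormedSpace 𝕜 H]
    (n m : ℕ)
    (S1 : Set (ContinuousMultilinearMap 𝕜 (fun _ : Fin n => E) F))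
    (N1 : ContinuousMultilinearMap 𝕜 (fun _ : Fin n => E) F → ℝ)
    (S2 : Set (ContinuousMultilinearMap 𝕜 (fun _ : Fin (m * n) => G) H))
    (N2 : ContinuousMultilinearMap 𝕜 (fun _ : Fin (m * n) => G) H → ℝ)
    (hN1 : ∀ A, 0 ≤ N1 A) (hN2 : ∀ C, 0 ≤ N2 C)
    -- the hyper-ideal property of `𝓗` (stated pointwise for the composed map):
    (hhyper : ∀ (t : F →L[𝕜] H) (A : ContinuousMultilinearMap 𝕜 (fun _ : Fin n => E) F),
      A ∈ S1 → ∀ (Bv : Fin n → ContinuousMultilinearMap 𝕜 (fun _ : Fin m => G) E)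
        (C : ContinuousMultilinearMap 𝕜 (fun _ : Fin (m * n) => G) H),
      (∀ v : Fin (m * n) → G,
          C v = t (A fun i => Bv i fun j => v (finProdFinEquiv (j, i)))) →
      C ∈ S2 ∧ N2 C ≤ ‖t‖ * N1 A * ∏ i : Fin n, ‖Bv i‖)
    -- the data: `t`, the polynomial `Q ∈ 𝓟^𝓗(^nE;F)`, and the polynomial `R`:
    (t : F →L[𝕜] H) (Q : E → F)
    (hQ : ∃ A ∈ S1, ∀ x : E, A (fun _ => x) = Q x)
    (R : G → E)
    (hR : ∃ BR : ContinuousMultilinearMap 𝕜 (fun _ : Fin m => G) E,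
      ∀ x : G, BR (fun _ => x) = R x) :
    (∃ C ∈ S2, ∀ x : G, C (fun _ => x) = t (Q (R x))) ∧
      sInf {r : ℝ | ∃ C ∈ S2, (∀ x : G, C (fun _ => x) = t (Q (R x))) ∧ r = N2 C}
        ≤ ((m : ℝ) ^ m / (m.factorial : ℝ)) ^ n * ‖t‖ *
          sInf {r : ℝ | ∃ A ∈ S1, (∀ x : E, A (fun _ => x) = Q x) ∧ r = N1 A} *
          (sSup {r : ℝ | ∃ x ∈ closedBall (0 : G) 1, r = ‖R x‖}) ^ n := by
  obtain ⟨B, hB⟩ := hR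
  obtain rfl : R = fun x => B fun _ => x := funext fun x => (hB x).symm
  set M := sSup {r : ℝ | ∃ x ∈ closedBall (0 : G) 1, r = ‖B fun _ => x‖}
  set k := (m : ℝ) ^ m / (m.factorial : ℝ)
  have hsymm : ‖B.symmetrize‖ ≤ k * M := by
    simpa only [Fintype.card_fin] using
      B.norm_symmetrize_le fun x hx => B.norm_apply_const_le_sSup hx
  have hM0 : 0 ≤ M := Real.sSup_nonneg <| by rintro _ ⟨x, -, rfl⟩; exact norm_nonneg _
  have represent : ∀ A ∈ S1, (∀ x : E, A (fun _ => x) = Q x) →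
      ∃ C ∈ S2, (∀ x : G, C (fun _ => x) = t (Q (B fun _ => x))) ∧
        N2 C ≤ k ^ n * ‖t‖ * M ^ n * N1 A := by
    intro A hA hAQ
    let C := (t.compContinuousMultilinearMap (A.compContinuousMultilinearMap
      fun _ => B.symmetrize)).domDomCongr
        ((sigmaEquivProd (Fin n) (Fin m)).trans ((prodComm _ _).trans finProdFinEquiv))
    obtain ⟨hCS, hCN⟩ := hhyper t A hA (fun _ => B.symmetrize) C fun v => rfl
    refine ⟨C, hCS, fun x => ?_, hCN.trans ?_⟩
    · change t (A fun _ => B.symmetrize fun _ => x) = _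
      rw [B.symmetrize_apply_const, hAQ]
    · have := hN1 A
      calc ‖t‖ * N1 A * ∏ _i : Fin n, ‖B.symmetrize‖ ≤ ‖t‖ * N1 A * (k * M) ^ n := by
            rw [prod_const, card_univ, Fintype.card_fin]
            gcongr
        _ = k ^ n * ‖t‖ * M ^ n * N1 A := by ring
  obtain ⟨A, hA, hAQ⟩ := hQ
  obtain ⟨C, hCS, hCQ, -⟩ := represent A hA hAQ
  refine ⟨⟨C, hCS, hCQ⟩, ?_⟩
  calc _ ≤ k ^ n * ‖t‖ * M ^ n *
        sInf {r : ℝ | ∃ A ∈ S1, (∀ x : E, A (fun _ => x) = Q x) ∧ r = N1 A} := by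
        refine Real.sInf_le_mul_sInf ⟨0, ?_⟩ ⟨_, A, hA, hAQ, rfl⟩ (by positivity) ?_
        · rintro _ ⟨C, -, -, rfl⟩
          exact hN2 C
        · rintro _ ⟨A, hA, hAQ, rfl⟩
          obtain ⟨C, hCS, hCQ, hCN⟩ := represent A hA hAQ
          exact ⟨_, ⟨C, hCS, hCQ, rfl⟩, hCN⟩
    _ = _ := by ring

/-- Let `𝓗` be a normed multilinear hyper-ideal, with components
`S1 = 𝓗(^nE;F)` (norm `N1`) and `S2 = 𝓗(^{mn}G;H)` (norm `N2`), so that the hyper-ideal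
property holds: compositions `t ∘ A ∘ (B₁,…,B_n)` of `A ∈ S1` with continuous `m`-linear
maps `Bᵢ : G^m → E` and a bounded linear `t : F → H` land in `S2` with
`N2 ≤ ‖t‖ N1(A) ∏ ‖Bᵢ‖`. Define `𝓟^𝓗` via representatives. Then for every
`t ∈ 𝓛(F;H)`, `Q ∈ 𝓟^𝓗(^nE;F)` and every continuous `m`-homogeneous polynomial
`R : G → E`, the composition `t ∘ Q ∘ R ∈ 𝓟^𝓗(^{mn}G;H)` and
`‖t∘Q∘R‖_{𝓟^𝓗} ≤ (m^m/m!)^n ‖t‖ ‖Q‖_{𝓟^𝓗} ‖R‖^n`. -/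
theorem stmt2 {𝕜 E F G H : Type*} [RCLike 𝕜]
    [NormedAddCommGroup E] [NormedSpace 𝕜 E] [CompleteSpace E]
    [NormedAddCommGroup F] [NormedSpace 𝕜 F] [CompleteSpace F]
    [NormedAddCommGroup G] [NormedSpace 𝕜 G] [CompleteSpace G]
    [NormedAddCommGroup H] [NormedSpace 𝕜 H] [CompleteSpace H]
    (n m : ℕ) (hn : 0 < n) (hm : 0 < m)
    (S1 : Set (ContinuousMultilinearMap 𝕜 (fun _ : Fin n => E) F))
    (N1 : ContinuousMultilinearMap 𝕜 (fun _ : Fin n => E) F → ℝ)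
    (S2 : Set (ContinuousMultilinearMap 𝕜 (fun _ : Fin (m * n) => G) H))
    (N2 : ContinuousMultilinearMap 𝕜 (fun _ : Fin (m * n) => G) H → ℝ)
    (hN1 : ∀ A, 0 ≤ N1 A) (hN2 : ∀ C, 0 ≤ N2 C)
    -- the hyper-ideal property of `𝓗` (stated pointwise for the composed map):
    (hhyper : ∀ (t : F →L[𝕜] H) (A : ContinuousMultilinearMap 𝕜 (fun _ : Fin n => E) F),
      A ∈ S1 → ∀ (Bv : Fin n → ContinuousMultilinearMap 𝕜 (fun _ : Fin m => G) E)
        (C : ContinuousMultilinearMap 𝕜 (fun _ : Fin (m * n) => G) H),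
      (∀ v : Fin (m * n) → G,
          C v = t (A fun i => Bv i fun j => v (finProdFinEquiv (j, i)))) →
      C ∈ S2 ∧ N2 C ≤ ‖t‖ * N1 A * ∏ i : Fin n, ‖Bv i‖)
    -- the data: `t`, the polynomial `Q ∈ 𝓟^𝓗(^nE;F)`, and the polynomial `R`:
    (t : F →L[𝕜] H) (Q : E → F)
    (hQ : ∃ A ∈ S1, ∀ x : E, A (fun _ => x) = Q x)
    (R : G → E)
    (hR : ∃ BR : ContinuousMultilinearMap 𝕜 (fun _ : Fin m => G) E,
      ∀ x : G, BR (fun _ => x) = R x) :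
    (∃ C ∈ S2, ∀ x : G, C (fun _ => x) = t (Q (R x))) ∧
      sInf {r : ℝ | ∃ C ∈ S2, (∀ x : G, C (fun _ => x) = t (Q (R x))) ∧ r = N2 C}
        ≤ ((m : ℝ) ^ m / (m.factorial : ℝ)) ^ n * ‖t‖ *
          sInf {r : ℝ | ∃ A ∈ S1, (∀ x : E, A (fun _ => x) = Q x) ∧ r = N1 A} *
          (sSup {r : ℝ | ∃ x ∈ closedBall (0 : G) 1, r = ‖R x‖}) ^ n :=
  stmt2_general n m S1 N1 S2 N2 hN1 hN2 hhyper t Q hQ R hR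
end

section
/- Let 𝓖 be a class of continuous multilinear operators between Banach spaces. Then 𝓖 is symmetric (i.e., A_s ∈ 𝓖 whenever A ∈ 𝓖, where A_s is the symmetrization) if and only if for all n, E, F the equality {P ∈ 𝓟(^nE;F) : ∃ A ∈ 𝓖 with Â = P} = {P ∈ 𝓟(^nE;F) : P̌ ∈ 𝓖} holds. -/
universe u

open Finset in
private lemma subset_sign_sum (𝕜 : Type) [RCLike 𝕜] {n : ℕ} (T : Finset (Fin n)) :
    ∑ S : Finset (Fin n), (if T ⊆ S then (-1 : 𝕜) ^ S.card else 0) =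
      if T = Finset.univ then (-1 : 𝕜) ^ n else 0 := by
  classical
  rw [← Finset.sum_filter]
  have key : ∑ S ∈ Finset.univ.filter (fun S => T ⊆ S), (-1 : 𝕜) ^ S.card
      = ∑ R ∈ Tᶜ.powerset, (-1 : 𝕜) ^ (T.card + R.card) := by
    refine Finset.sum_bij' (fun S _ => S \ T) (fun R _ => T ∪ R) ?_ ?_ ?_ ?_ ?_
    · intro S hS
      simp only [Finset.mem_filter, Finset.mem_univ, true_and] at hS
      simp only [Finset.mem_powerset]
      intro x hx
      simp only [Finset.mem_sdiff] at hx
      simp [Finset.mem_compl, hx.2]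
    · intro R hR
      simp only [Finset.mem_filter, Finset.mem_univ, true_and]
      exact Finset.subset_union_left
    · intro S hS
      simp only [Finset.mem_filter, Finset.mem_univ, true_and] at hS
      exact Finset.union_sdiff_of_subset hS
    · intro R hR
      simp only [Finset.mem_powerset] at hR
      exact Finset.union_sdiff_cancel_left ((disjoint_compl_right : Disjoint T Tᶜ).mono_right hR)
    · intro S hS
      simp only [Finset.mem_filter, Finset.mem_univ, true_and] at hS
      rw [← Finset.card_union_of_disjoint Finset.disjoint_sdiff,
        Finset.union_sdiff_of_subset hS]
  rw [key]
  have : ∀ R ∈ Tᶜ.powerset, (-1 : 𝕜) ^ (T.card + R.card)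
      = (-1 : 𝕜) ^ T.card * (-1 : 𝕜) ^ R.card := fun R _ => pow_add _ _ _
  rw [Finset.sum_congr rfl this, ← Finset.mul_sum]
  have hz : (∑ m ∈ Tᶜ.powerset, (-1 : 𝕜) ^ m.card)
      = ((∑ m ∈ Tᶜ.powerset, (-1 : ℤ) ^ m.card : ℤ) : 𝕜) := by push_cast; rfl
  rw [hz, Finset.sum_powerset_neg_one_pow_card]
  by_cases hT : T = Finset.univ
  · simp [hT, (Finset.compl_eq_empty_iff T).mpr hT, Finset.card_univ]
  · have : Tᶜ ≠ ∅ := fun h => hT ((Finset.compl_eq_empty_iff T).mp h)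
    simp [this, hT]

/-- Polarization formula for a symmetric continuous multilinear map. -/
private lemma polarization {𝕜 : Type} [RCLike 𝕜] {n : ℕ} {E F : Type u}
    [NormedAddCommGroup E] [NormedSpace 𝕜 E] [NormedAddCommGroup F] [NormedSpace 𝕜 F]
    (B : ContinuousMultilinearMap 𝕜 (fun _ : Fin n => E) F)
    (hB : ∀ (σ : Equiv.Perm (Fin n)) (v : Fin n → E), B (fun i => v (σ i)) = B v)
    (v : Fin n → E) :
    ∑ S : Finset (Fin n), (-1 : 𝕜) ^ S.card • B (fun _ => ∑ i ∈ S, v i)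
      = (-1 : 𝕜) ^ n • (n.factorial : 𝕜) • B v := by
  classical
  have piEq : ∀ S : Finset (Fin n), Fintype.piFinset (fun _ : Fin n => S)
      = Finset.univ.filter (fun f : Fin n → Fin n => Finset.univ.image f ⊆ S) := by
    intro S; ext f
    simp [Fintype.mem_piFinset, Finset.image_subset_iff]
  have step1 : ∀ S : Finset (Fin n),
      (-1 : 𝕜) ^ S.card • B (fun _ => ∑ i ∈ S, v i)
        = ∑ f : Fin n → Fin n, (if Finset.univ.image f ⊆ S then
            (-1 : 𝕜) ^ S.card • B (fun j => v (f j)) else 0) := by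
    intro S
    rw [B.map_sum_finset (fun _ j => v j) (fun _ => S), Finset.smul_sum, piEq,
      Finset.sum_filter]
  rw [Finset.sum_congr rfl (fun S _ => step1 S), Finset.sum_comm]
  have step2 : ∀ f : Fin n → Fin n,
      (∑ S : Finset (Fin n), if Finset.univ.image f ⊆ S then
          (-1 : 𝕜) ^ S.card • B (fun j => v (f j)) else 0)
        = (if Finset.univ.image f = Finset.univ then (-1 : 𝕜) ^ n else 0)
            • B (fun j => v (f j)) := by
    intro f
    rw [← subset_sign_sum 𝕜 (Finset.univ.image f), Finset.sum_smul]
    refine Finset.sum_congr rfl fun S _ => ?_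
    rw [ite_smul, zero_smul]
  rw [Finset.sum_congr rfl (fun f _ => step2 f)]
  have step3 : ∀ f : Fin n → Fin n,
      (if Finset.univ.image f = Finset.univ then (-1 : 𝕜) ^ n else 0) • B (fun j => v (f j))
        = if Function.Bijective f then (-1 : 𝕜) ^ n • B (fun j => v (f j)) else 0 := by
    intro f
    have : Finset.univ.image f = Finset.univ ↔ Function.Bijective f := by
      constructor
      · intro h
        refine Finite.surjective_iff_bijective.mp fun y => ?_
        have hy : y ∈ Finset.univ.image f := by rw [h]; exact Finset.mem_univ y
        obtain ⟨x, _, hx⟩ := Finset.mem_image.mp hy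
        exact ⟨x, hx⟩
      · intro h; exact Finset.image_univ_of_surjective h.surjective
    rw [ite_smul, zero_smul]
    simp only [this]
  rw [Finset.sum_congr rfl (fun f _ => step3 f), ← Finset.sum_filter]
  have step4 : ∑ f ∈ Finset.univ.filter (fun f : Fin n → Fin n => Function.Bijective f),
      (-1 : 𝕜) ^ n • B (fun j => v (f j))
        = ∑ σ : Equiv.Perm (Fin n), (-1 : 𝕜) ^ n • B (fun j => v (σ j)) := by
    refine Finset.sum_bij' (fun f hf => Equiv.ofBijective f (by
        simpa using (Finset.mem_filter.mp hf).2)) (fun σ _ => ⇑σ) ?_ ?_ ?_ ?_ ?_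
    · intro f hf; exact Finset.mem_univ _
    · intro σ _
      simp only [Finset.mem_filter, Finset.mem_univ, true_and]
      exact σ.bijective
    · intro f hf; rfl
    · intro σ _; ext x; rfl
    · intro f hf; rfl
  rw [step4]
  have step5 : ∀ σ : Equiv.Perm (Fin n), B (fun j => v (σ j)) = B v := fun σ => hB σ v
  simp only [step5]
  rw [Finset.sum_const, Finset.card_univ, Fintype.card_perm, Fintype.card_fin,
    ← Nat.cast_smul_eq_nsmul 𝕜, smul_smul, smul_smul, mul_comm]

/-- Two symmetric continuous multilinear maps agreeing on the diagonal are equal. -/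
private lemma sym_ext {𝕜 : Type} [RCLike 𝕜] {n : ℕ} {E F : Type u}
    [NormedAddCommGroup E] [NormedSpace 𝕜 E] [NormedAddCommGroup F] [NormedSpace 𝕜 F]
    (B C : ContinuousMultilinearMap 𝕜 (fun _ : Fin n => E) F)
    (hB : ∀ (σ : Equiv.Perm (Fin n)) (v : Fin n → E), B (fun i => v (σ i)) = B v)
    (hC : ∀ (σ : Equiv.Perm (Fin n)) (v : Fin n → E), C (fun i => v (σ i)) = C v)
    (hd : ∀ x : E, B (fun _ => x) = C (fun _ => x)) : B = C := by
  ext v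
  have h1 := polarization B hB v
  have h2 := polarization C hC v
  simp only [hd] at h1
  have h3 : (-1 : 𝕜) ^ n • (n.factorial : 𝕜) • B v
      = (-1 : 𝕜) ^ n • (n.factorial : 𝕜) • C v := h1.symm.trans h2
  have hne : ((-1 : 𝕜) ^ n * (n.factorial : 𝕜)) ≠ 0 := by
    apply mul_ne_zero
    · exact pow_ne_zero _ (by norm_num)
    · exact_mod_cast Nat.cast_ne_zero.mpr n.factorial_ne_zero
  rw [smul_smul, smul_smul] at h3
  exact smul_right_injective F hne h3

private lemma symm_of_symmetrized {𝕜 : Type} [RCLike 𝕜] {n : ℕ} {E F : Type u}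
    [NormedAddCommGroup E] [NormedSpace 𝕜 E] [NormedAddCommGroup F] [NormedSpace 𝕜 F]
    (A : ContinuousMultilinearMap 𝕜 (fun _ : Fin n => E) F)
    (τ : Equiv.Perm (Fin n)) (v : Fin n → E) :
    (((n.factorial : 𝕜))⁻¹ • ∑ σ : Equiv.Perm (Fin n), A.domDomCongr σ)
      (fun i => v (τ i))
    = (((n.factorial : 𝕜))⁻¹ • ∑ σ : Equiv.Perm (Fin n), A.domDomCongr σ) v := by
  simp only [ContinuousMultilinearMap.smul_apply, ContinuousMultilinearMap.sum_apply,
    ContinuousMultilinearMap.domDomCongr_apply]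
  congr 1
  exact Equiv.sum_comp (Equiv.mulLeft τ) (fun σ : Equiv.Perm (Fin n) => A fun i => v (σ i))

private lemma diag_of_symmetrized {𝕜 : Type} [RCLike 𝕜] {n : ℕ} {E F : Type u}
    [NormedAddCommGroup E] [NormedSpace 𝕜 E] [NormedAddCommGroup F] [NormedSpace 𝕜 F]
    (A : ContinuousMultilinearMap 𝕜 (fun _ : Fin n => E) F) (x : E) :
    (((n.factorial : 𝕜))⁻¹ • ∑ σ : Equiv.Perm (Fin n), A.domDomCongr σ) (fun _ => x)
      = A (fun _ => x) := by
  simp only [ContinuousMultilinearMap.smul_apply, ContinuousMultilinearMap.sum_apply,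
    ContinuousMultilinearMap.domDomCongr_apply]
  rw [Finset.sum_const, Finset.card_univ, Fintype.card_perm, Fintype.card_fin,
    ← Nat.cast_smul_eq_nsmul 𝕜, smul_smul,
    inv_mul_cancel₀ (by exact_mod_cast n.factorial_ne_zero : (n.factorial : 𝕜) ≠ 0), one_smul]

/-- A class `𝓖` of continuous multilinear operators between Banach spaces
(whose components are linear subspaces containing the finite type maps) is symmetric
(`A_s ∈ 𝓖` whenever `A ∈ 𝓖`) if and only if for all `n`, `E`, `F`,
`𝓟^𝓖(^nE;F) = 𝓟_𝓖(^nE;F)`, i.e. the set of polynomials admitting some associated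
multilinear map in `𝓖` equals the set of polynomials whose symmetric associated map
lies in `𝓖`. -/
theorem stmt3 (𝕜 : Type) [RCLike 𝕜]
    (G : ∀ (n : ℕ) (E F : Type u) [NormedAddCommGroup E] [NormedSpace 𝕜 E] [CompleteSpace E]
      [NormedAddCommGroup F] [NormedSpace 𝕜 F] [CompleteSpace F],
      Set (ContinuousMultilinearMap 𝕜 (fun _ : Fin n => E) F))
    -- each component is a linear subspace containing the maps of finite type:
    (hadd : ∀ (n : ℕ) (E F : Type u) [NormedAddCommGroup E] [NormedSpace 𝕜 E] [CompleteSpace E]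
      [NormedAddCommGroup F] [NormedSpace 𝕜 F] [CompleteSpace F],
      ∀ A B, A ∈ G n E F → B ∈ G n E F → A + B ∈ G n E F)
    (hsmul : ∀ (n : ℕ) (E F : Type u) [NormedAddCommGroup E] [NormedSpace 𝕜 E] [CompleteSpace E]
      [NormedAddCommGroup F] [NormedSpace 𝕜 F] [CompleteSpace F],
      ∀ (c : 𝕜) A, A ∈ G n E F → c • A ∈ G n E F)
    (hfin : ∀ (n : ℕ) (E F : Type u) [NormedAddCommGroup E] [NormedSpace 𝕜 E] [CompleteSpace E]
      [NormedAddCommGroup F] [NormedSpace 𝕜 F] [CompleteSpace F],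
      ∀ (A : ContinuousMultilinearMap 𝕜 (fun _ : Fin n => E) F),
        (∃ (m : ℕ) (φ : Fin m → Fin n → (E →L[𝕜] 𝕜)) (y : Fin m → F),
          ∀ v : Fin n → E, A v = ∑ k : Fin m, (∏ i : Fin n, φ k i (v i)) • y k) →
        A ∈ G n E F) :
    -- `𝓖` is symmetric ↔ `𝓟^𝓖 = 𝓟_𝓖` for all components
    (∀ (n : ℕ) (E F : Type u) [NormedAddCommGroup E] [NormedSpace 𝕜 E] [CompleteSpace E]
      [NormedAddCommGroup F] [NormedSpace 𝕜 F] [CompleteSpace F],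
      ∀ A ∈ G n E F,
        ((n.factorial : 𝕜))⁻¹ • ∑ σ : Equiv.Perm (Fin n), A.domDomCongr σ ∈ G n E F) ↔
    (∀ (n : ℕ) (E F : Type u) [NormedAddCommGroup E] [NormedSpace 𝕜 E] [CompleteSpace E]
      [NormedAddCommGroup F] [NormedSpace 𝕜 F] [CompleteSpace F],
      {P : E → F | ∃ A ∈ G n E F, ∀ x : E, P x = A (fun _ => x)} =
      {P : E → F | ∃ B ∈ G n E F,
        (∀ (σ : Equiv.Perm (Fin n)) (v : Fin n → E), B (fun i => v (σ i)) = B v) ∧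
        ∀ x : E, P x = B (fun _ => x)}) := by
  constructor
  · intro hsym n E F _ _ _ _ _ _
    ext P
    constructor
    · rintro ⟨A, hA, hP⟩
      refine ⟨((n.factorial : 𝕜))⁻¹ • ∑ σ : Equiv.Perm (Fin n), A.domDomCongr σ,
        hsym n E F A hA, fun σ v => symm_of_symmetrized A σ v, fun x => ?_⟩
      rw [hP x, diag_of_symmetrized]
    · rintro ⟨B, hB, _, hP⟩
      exact ⟨B, hB, hP⟩
  · intro h n E F _ _ _ _ _ _ A hA
    have hset := h n E F
    have hP : (fun x : E => A (fun _ => x)) ∈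
        {P : E → F | ∃ A' ∈ G n E F, ∀ x : E, P x = A' (fun _ => x)} :=
      ⟨A, hA, fun _ => rfl⟩
    rw [hset] at hP
    obtain ⟨B, hBG, hBsym, hPB⟩ := hP
    have heq : ((n.factorial : 𝕜))⁻¹ • ∑ σ : Equiv.Perm (Fin n), A.domDomCongr σ = B := by
      refine sym_ext _ _ (fun σ v => symm_of_symmetrized A σ v) hBsym fun x => ?_
      rw [diag_of_symmetrized]
      exact hPB x
    rw [heq]
    exact hBG
end

section
/- The Dunford-Pettis class fails the restriction property (CH1): let E be a Banach space, a ∈ E with a ≠ 0, and φ ∈ E' with |φ(a)| = 1. Then the bilinear map T : E × ℓ₂ → ℓ₂, T(x, y) = φ(x)·y, is Dunford-Pettis, but the linear map T_a : ℓ₂ → ℓ₂, T_a(y) = T(a, y) = φ(a)·y, is not Dunford-Pettis (equivalently, not completely continuous), since T_a(e_j) does not converge to 0 in norm while (e_j) is weakly null. -/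
/-!
A weakly null sequence is bounded by the uniform boundedness principle, so if `φ (x j) → 0` and
`(y j)` is weakly null then `φ (x j) • y j → 0` in norm. On the other hand the unit vectors of
`ℓ²` are weakly null (Riesz representation and Bessel's inequality) while `‖φ a • e j‖ = 1`.
-/

open Filter Topology

noncomputable section

def WeaklyNull {𝕜 E : Type*} [RCLike 𝕜] [NormedAddCommGroup E] [NormedSpace 𝕜 E]
    (x : ℕ → E) : Prop :=
  ∀ φ : E →L[𝕜] 𝕜, Tendsto (fun j => φ (x j)) atTop (nhds 0)

namespace WeaklyNull

variable {𝕜 F : Type*} [RCLike 𝕜] [NormedAddCommGroup F] [NormedSpace 𝕜 F]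

theorem isBoundedUnder_norm {y : ℕ → F} (hy : WeaklyNull (𝕜 := 𝕜) y) :
    IsBoundedUnder (· ≤ ·) atTop (norm ∘ y) := by
  -- Banach–Steinhaus for the `y j`, viewed in the bidual as functionals on the (complete) dual
  obtain ⟨C, hC⟩ := banach_steinhaus
    (g := fun j => NormedSpace.inclusionInDoubleDual 𝕜 F (y j))
    fun ψ => have ⟨B, hB⟩ := (hy ψ).norm.bddAbove_range; ⟨B, fun j => hB ⟨j, rfl⟩⟩
  refine isBoundedUnder_of ⟨C, fun j => ?_⟩
  rw [Function.comp_apply, ← (NormedSpace.inclusionInDoubleDualLi 𝕜).norm_map]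
  exact hC j

theorem tendsto_smul {E : Type*} [NormedAddCommGroup E] [NormedSpace 𝕜 E] {x : ℕ → E}
    {y : ℕ → F} (hx : WeaklyNull (𝕜 := 𝕜) x) (hy : WeaklyNull (𝕜 := 𝕜) y) (φ : E →L[𝕜] 𝕜) :
    Tendsto (fun j => φ (x j) • y j) atTop (𝓝 0) :=
  (hx φ).zero_smul_isBoundedUnder_le hy.isBoundedUnder_norm

end WeaklyNull

theorem Orthonormal.weaklyNull {𝕜 H : Type*} [RCLike 𝕜] [NormedAddCommGroup H]
    [InnerProductSpace 𝕜 H] [CompleteSpace H] {e : ℕ → H} (he : Orthonormal 𝕜 e) :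
    WeaklyNull (𝕜 := 𝕜) e := by
  intro ψ
  set v := (InnerProductSpace.toDual 𝕜 H).symm ψ
  have hψ : ∀ j, ‖ψ (e j)‖ = ‖inner 𝕜 (e j) v‖ := fun j => by
    rw [← InnerProductSpace.toDual_symm_apply, norm_inner_symm]
  have hbessel : Tendsto (fun j => ‖inner 𝕜 (e j) v‖ ^ 2) atTop (𝓝 0) :=
    (he.inner_products_summable v).tendsto_atTop_zero
  rw [tendsto_zero_iff_norm_tendsto_zero]
  simpa [hψ, Real.sqrt_sq (norm_nonneg _)] using hbessel.sqrt

theorem lp.orthonormal_single {𝕜 ι : Type*} [RCLike 𝕜] [DecidableEq ι] :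
    Orthonormal 𝕜 (fun j => lp.single 2 j (1 : 𝕜) : ι → lp (fun _ : ι => 𝕜) 2) := by
  rw [orthonormal_iff_ite]
  intro i j
  rw [lp.inner_single_left]
  simp [lp.single_apply, Pi.single_apply]

theorem stmt8_general {𝕜 E : Type*} [RCLike 𝕜]
    [NormedAddCommGroup E] [NormedSpace 𝕜 E]
    (a : E) (φ : E →L[𝕜] 𝕜) (hφa : ‖φ a‖ = 1) :
    -- `T` is Dunford–Pettis:
    (∀ (x : ℕ → E) (y : ℕ → lp (fun _ : ℕ => 𝕜) 2),
      WeaklyNull (𝕜 := 𝕜) x → WeaklyNull (𝕜 := 𝕜) y →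
      Tendsto (fun j => ‖φ (x j) • y j‖) atTop (nhds 0)) ∧
    -- but `T_a` is not Dunford–Pettis:
    ¬ (∀ y : ℕ → lp (fun _ : ℕ => 𝕜) 2, WeaklyNull (𝕜 := 𝕜) y →
      Tendsto (fun j => ‖φ a • y j‖) atTop (nhds 0)) := by
  refine ⟨fun x y hx hy => tendsto_zero_iff_norm_tendsto_zero.mp (hx.tendsto_smul hy φ),
    fun hTa => ?_⟩
  have he := lp.orthonormal_single (𝕜 := 𝕜) (ι := ℕ)
  have hunit : ∀ j, ‖φ a • (lp.single 2 j 1 : lp (fun _ : ℕ => 𝕜) 2)‖ = 1 := fun j => by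
    rw [norm_smul, hφa, he.1 j, one_mul]
  have h := hTa _ he.weaklyNull
  simp only [hunit] at h
  exact one_ne_zero (tendsto_nhds_unique tendsto_const_nhds h)

/-- the Dunford–Pettis class fails (CH1): for a Banach space `E`, `a ∈ E`
with `a ≠ 0`, and `φ ∈ E'` with `|φ(a)| = 1`, the bilinear map
`T : E × ℓ₂ → ℓ₂`, `T(x,y) = φ(x) • y`, is Dunford–Pettis, but the fixed-argument linear
map `T_a(y) = φ(a) • y` is not Dunford–Pettis (not completely continuous). -/
theorem stmt8 {𝕜 E : Type*} [RCLike 𝕜]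
    [NormedAddCommGroup E] [NormedSpace 𝕜 E] [CompleteSpace E]
    (a : E) (ha : a ≠ 0) (φ : E →L[𝕜] 𝕜) (hφa : ‖φ a‖ = 1) :
    -- `T` is Dunford–Pettis:
    (∀ (x : ℕ → E) (y : ℕ → lp (fun _ : ℕ => 𝕜) 2),
      WeaklyNull (𝕜 := 𝕜) x → WeaklyNull (𝕜 := 𝕜) y →
      Tendsto (fun j => ‖φ (x j) • y j‖) atTop (nhds 0)) ∧
    -- but `T_a` is not Dunford–Pettis:
    ¬ (∀ y : ℕ → lp (fun _ : ℕ => 𝕜) 2, WeaklyNull (𝕜 := 𝕜) y →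
      Tendsto (fun j => ‖φ a • y j‖) atTop (nhds 0)) :=
  stmt8_general a φ hφa

end
end

section
/- Composition ideals satisfy the multiplication property: if 𝓘 is a p-normed operator ideal, T ∈ 𝓘∘𝓛(E_1,...,E_n;F) and Q ∈ 𝓛(E_{n+1},...,E_{n+m};𝕂) is a continuous m-linear form, then QT ∈ 𝓘∘𝓛(E_1,...,E_{n+m};F), where (QT)(x_1,...,x_{n+m}) = Q(x_{n+1},...,x_{n+m})·T(x_1,...,x_n), and ‖QT‖_{𝓘∘𝓛} ≤ ‖Q‖·‖T‖_{𝓘∘𝓛}. -/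
universe u

structure BanachSp (𝕜 : Type u) [NontriviallyNormedField 𝕜] : Type (u + 1) where
  carrier : Type u
  [grp : NormedAddCommGroup carrier]
  [mod : NormedSpace 𝕜 carrier]
  [comp : CompleteSpace carrier]

attribute [instance] BanachSp.grp BanachSp.mod BanachSp.comp

section aux
variable {𝕜 : Type u} [RCLike 𝕜] {n m : ℕ} {E : Fin (n + m) → Type u} {G : Type u}
  [∀ i, NormedAddCommGroup (E i)] [∀ i, NormedSpace 𝕜 (E i)]
  [NormedAddCommGroup G] [NormedSpace 𝕜 G]

private lemma upd_cast_cast [DecidableEq (Fin (n+m))] (v : ∀ i, E i) (j : Fin n) (x : E (Fin.castAdd m j)) :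
    (fun i : Fin n => Function.update v (Fin.castAdd m j) x (Fin.castAdd m i)) =
      Function.update (fun i => v (Fin.castAdd m i)) j x := by
  ext i
  rcases eq_or_ne i j with rfl | h
  · simp
  · rw [Function.update_of_ne h, Function.update_of_ne]
    exact fun hc => h (Fin.castAdd_injective _ _ hc)

private lemma upd_cast_nat [DecidableEq (Fin (n+m))] (v : ∀ i, E i) (j : Fin n) (x : E (Fin.castAdd m j)) :
    (fun i : Fin m => Function.update v (Fin.castAdd m j) x (Fin.natAdd n i)) =
      fun i => v (Fin.natAdd n i) := by
  ext i
  rw [Function.update_of_ne]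
  intro hc
  have := congrArg Fin.val hc
  simp [Fin.natAdd] at this
  omega

private lemma upd_nat_nat [DecidableEq (Fin (n+m))] (v : ∀ i, E i) (j : Fin m) (x : E (Fin.natAdd n j)) :
    (fun i : Fin m => Function.update v (Fin.natAdd n j) x (Fin.natAdd n i)) =
      Function.update (fun i => v (Fin.natAdd n i)) j x := by
  ext i
  rcases eq_or_ne i j with rfl | h
  · simp
  · rw [Function.update_of_ne h, Function.update_of_ne]
    intro hc
    have := congrArg Fin.val hc
    simp [Fin.natAdd] at this
    exact h (Fin.ext this)

private lemma upd_nat_cast [DecidableEq (Fin (n+m))] (v : ∀ i, E i) (j : Fin m) (x : E (Fin.natAdd n j)) :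
    (fun i : Fin n => Function.update v (Fin.natAdd n j) x (Fin.castAdd m i)) =
      fun i => v (Fin.castAdd m i) := by
  ext i
  rw [Function.update_of_ne]
  intro hc
  have := congrArg Fin.val hc
  simp [Fin.natAdd] at this
  omega

/-- product of a scalar multilinear form on the last `m` coordinates and a vector-valued
multilinear map on the first `n` coordinates -/
noncomputable def mulQB (Q : ContinuousMultilinearMap 𝕜 (fun i : Fin m => E (Fin.natAdd n i)) 𝕜)
    (B : ContinuousMultilinearMap 𝕜 (fun i : Fin n => E (Fin.castAdd m i)) G) :
    ContinuousMultilinearMap 𝕜 E G :=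
  MultilinearMap.mkContinuous
    { toFun := fun v => Q (fun i => v (Fin.natAdd n i)) • B (fun i => v (Fin.castAdd m i))
      map_update_add' := by
        intro inst v i x y
        revert x y
        refine Fin.addCases (fun j => ?_) (fun j => ?_) i <;> intro x y
        · simp only [upd_cast_cast, upd_cast_nat, ContinuousMultilinearMap.map_update_add, smul_add]
        · simp only [upd_nat_nat, upd_nat_cast, ContinuousMultilinearMap.map_update_add, add_smul]
      map_update_smul' := by
        intro inst v i c x
        revert x
        refine Fin.addCases (fun j => ?_) (fun j => ?_) i <;> intro x
        · simp only [upd_cast_cast, upd_cast_nat, ContinuousMultilinearMap.map_update_smul]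
          rw [smul_comm]
        · simp only [upd_nat_nat, upd_nat_cast, ContinuousMultilinearMap.map_update_smul, smul_eq_mul, mul_smul] }
    (‖Q‖ * ‖B‖)
    (by
      intro v
      simp only [MultilinearMap.coe_mk]
      rw [norm_smul, Fin.prod_univ_add]
      calc ‖Q fun i => v (Fin.natAdd n i)‖ * ‖B fun i => v (Fin.castAdd m i)‖
          ≤ (‖Q‖ * ∏ i : Fin m, ‖v (Fin.natAdd n i)‖) *
            (‖B‖ * ∏ i : Fin n, ‖v (Fin.castAdd m i)‖) := by
            apply mul_le_mul (Q.le_opNorm _) (B.le_opNorm _) (norm_nonneg _)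
            positivity
        _ = ‖Q‖ * ‖B‖ * ((∏ i : Fin n, ‖v (Fin.castAdd m i)‖) *
            ∏ i : Fin m, ‖v (Fin.natAdd n i)‖) := by ring)

lemma mulQB_apply (Q : ContinuousMultilinearMap 𝕜 (fun i : Fin m => E (Fin.natAdd n i)) 𝕜)
    (B : ContinuousMultilinearMap 𝕜 (fun i : Fin n => E (Fin.castAdd m i)) G) (v : ∀ i, E i) :
    mulQB Q B v = Q (fun i => v (Fin.natAdd n i)) • B (fun i => v (Fin.castAdd m i)) := rfl

lemma mulQB_norm_le (Q : ContinuousMultilinearMap 𝕜 (fun i : Fin m => E (Fin.natAdd n i)) 𝕜)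
    (B : ContinuousMultilinearMap 𝕜 (fun i : Fin n => E (Fin.castAdd m i)) G) :
    ‖mulQB Q B‖ ≤ ‖Q‖ * ‖B‖ :=
  MultilinearMap.mkContinuous_norm_le _ (by positivity) _

end aux

/-- composition ideals satisfy the multiplication property. If
`T ∈ 𝓘∘𝓛(E₁,…,Eₙ;F)` and `Q ∈ 𝓛(E_{n+1},…,E_{n+m};𝕜)`, then the `(n+m)`-linear map
`(QT)(x₁,…,x_{n+m}) = Q(x_{n+1},…,x_{n+m}) • T(x₁,…,xₙ)` belongs to `𝓘∘𝓛` with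
`‖QT‖_{𝓘∘𝓛} ≤ ‖Q‖ ‖T‖_{𝓘∘𝓛}`. -/
theorem stmt11 (𝕜 : Type u) [RCLike 𝕜]
    (I : ∀ G F : BanachSp 𝕜, Set (G.carrier →L[𝕜] F.carrier))
    (NI : ∀ G F : BanachSp 𝕜, (G.carrier →L[𝕜] F.carrier) → ℝ)
    (hNI : ∀ (G F : BanachSp 𝕜) (u : G.carrier →L[𝕜] F.carrier), 0 ≤ NI G F u)
    {n m : ℕ} (E : Fin (n + m) → Type u) (F : Type u)
    [∀ i, NormedAddCommGroup (E i)] [∀ i, NormedSpace 𝕜 (E i)] [∀ i, CompleteSpace (E i)]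
    [NormedAddCommGroup F] [NormedSpace 𝕜 F] [CompleteSpace F]
    (T : ContinuousMultilinearMap 𝕜 (fun i : Fin n => E (Fin.castAdd m i)) F)
    (hT : ∃ (G : BanachSp 𝕜), ∃ u ∈ I G (BanachSp.mk F),
      ∃ B : ContinuousMultilinearMap 𝕜 (fun i : Fin n => E (Fin.castAdd m i)) G.carrier,
        ∀ v, T v = u (B v))
    (Q : ContinuousMultilinearMap 𝕜 (fun i : Fin m => E (Fin.natAdd n i)) 𝕜)
    (QT : ContinuousMultilinearMap 𝕜 E F)
    (hQT : ∀ v : ∀ i, E i,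
      QT v = Q (fun i => v (Fin.natAdd n i)) • T (fun i => v (Fin.castAdd m i))) :
    (∃ (G : BanachSp 𝕜), ∃ u ∈ I G (BanachSp.mk F),
      ∃ C : ContinuousMultilinearMap 𝕜 E G.carrier, ∀ v, QT v = u (C v)) ∧
    sInf {r : ℝ | ∃ (G : BanachSp 𝕜), ∃ u ∈ I G (BanachSp.mk F),
        ∃ C : ContinuousMultilinearMap 𝕜 E G.carrier,
          (∀ v, QT v = u (C v)) ∧ r = NI G (BanachSp.mk F) u * ‖C‖} ≤
      ‖Q‖ * sInf {r : ℝ | ∃ (G : BanachSp 𝕜), ∃ u ∈ I G (BanachSp.mk F),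
        ∃ B : ContinuousMultilinearMap 𝕜 (fun i : Fin n => E (Fin.castAdd m i)) G.carrier,
          (∀ v, T v = u (B v)) ∧ r = NI G (BanachSp.mk F) u * ‖B‖} := by
  set SQT := {r : ℝ | ∃ (G : BanachSp 𝕜), ∃ u ∈ I G (BanachSp.mk F),
        ∃ C : ContinuousMultilinearMap 𝕜 E G.carrier,
          (∀ v, QT v = u (C v)) ∧ r = NI G (BanachSp.mk F) u * ‖C‖} with hSQT
  set ST := {r : ℝ | ∃ (G : BanachSp 𝕜), ∃ u ∈ I G (BanachSp.mk F),
        ∃ B : ContinuousMultilinearMap 𝕜 (fun i : Fin n => E (Fin.castAdd m i)) G.carrier,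
          (∀ v, T v = u (B v)) ∧ r = NI G (BanachSp.mk F) u * ‖B‖} with hST
  have hbdd : BddBelow SQT := by
    refine ⟨0, fun r hr => ?_⟩
    obtain ⟨G, u, hu, C, -, rfl⟩ := hr
    exact mul_nonneg (hNI _ _ _) (norm_nonneg _)
  -- for any factorization of T, get a factorization of QT
  have key : ∀ r ∈ ST, sInf SQT ≤ ‖Q‖ * r := by
    rintro r ⟨G, u, hu, B, hB, rfl⟩
    have hfac : ∀ v, QT v = u (mulQB Q B v) := by
      intro v
      rw [hQT v, mulQB_apply, hB, map_smul]
    have hmem : NI G (BanachSp.mk F) u * ‖mulQB Q B‖ ∈ SQT :=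
      ⟨G, u, hu, mulQB Q B, hfac, rfl⟩
    calc sInf SQT ≤ NI G (BanachSp.mk F) u * ‖mulQB Q B‖ := csInf_le hbdd hmem
      _ ≤ NI G (BanachSp.mk F) u * (‖Q‖ * ‖B‖) :=
        mul_le_mul_of_nonneg_left (mulQB_norm_le Q B) (hNI _ _ _)
      _ = ‖Q‖ * (NI G (BanachSp.mk F) u * ‖B‖) := by ring
  obtain ⟨G₀, u₀, hu₀, B₀, hB₀⟩ := hT
  have hSTne : ST.Nonempty := ⟨_, G₀, u₀, hu₀, B₀, hB₀, rfl⟩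
  constructor
  · exact ⟨G₀, u₀, hu₀, mulQB Q B₀, fun v => by
      rw [hQT v, mulQB_apply, hB₀, map_smul]⟩
  · rcases eq_or_lt_of_le (norm_nonneg Q) with hQ0 | hQpos
    · obtain ⟨r, hr⟩ := hSTne
      have h1 := key r hr
      rw [← hQ0] at h1 ⊢
      simpa using h1
    · rw [mul_comm, ← div_le_iff₀ hQpos]
      refine le_csInf hSTne fun r hr => ?_
      rw [div_le_iff₀ hQpos, mul_comm]
      exact key r hr
end

section
/- Let 𝓘 be a p-normed operator ideal. If T : E_1 × ⋯ × E_{n+1} → F is 𝓘-bounded, i.e., there exist a Banach space H and u ∈ 𝓘(H;F) with T(B_{E_1} × ⋯ × B_{E_{n+1}}) ⊆ u(B_H), then for every a_1 ∈ E_1 the n-linear map T_{a_1}(x_2,...,x_{n+1}) = T(a_1,x_2,...,x_{n+1}) is 𝓘-bounded, and ‖T_{a_1}‖_{𝓛_{⟨𝓘⟩}} ≤ ‖T‖_{𝓛_{⟨𝓘⟩}}·‖a_1‖, where ‖T‖_{𝓛_{⟨𝓘⟩}} = inf{‖u‖_𝓘 : u witnesses the 𝓘-boundedness of T}. -/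
open Metric Pointwise

universe u

/-!
Scaling the first variable: write `a₁ = ‖a₁‖ b` with `‖b‖ ≤ 1`. Then
`T_{a₁}(x) = ‖a₁‖ T(b, x)`, so every witness `u` of the `𝓘`-boundedness of `T` yields the
witness `‖a₁‖ u` for `T_{a₁}`, whose ideal norm is `‖a₁‖ ‖u‖_𝓘`. Taking infima gives the bound.
-/

theorem exists_norm_le_one_eq_norm_smul (𝕜 : Type*) [RCLike 𝕜] {E : Type*}
    [NormedAddCommGroup E] [NormedSpace 𝕜 E] (a : E) :
    ∃ b : E, ‖b‖ ≤ 1 ∧ a = (‖a‖ : 𝕜) • b := by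
  rcases eq_or_ne a 0 with rfl | ha
  · exact ⟨0, by simp⟩
  · refine ⟨(‖a‖ : 𝕜)⁻¹ • a, ?_, ?_⟩
    · rw [norm_smul, norm_inv, RCLike.norm_ofReal, abs_norm, inv_mul_cancel₀ (norm_ne_zero_iff.mpr ha)]
    · rw [smul_inv_smul₀ (by simpa using ha)]

theorem Real.sInf_le_sInf_mul {S S' : Set ℝ} {c : ℝ} (hc : 0 ≤ c) (hS : BddBelow S)
    (hS' : S'.Nonempty) (h : ∀ r ∈ S', r * c ∈ S) : sInf S ≤ sInf S' * c := by
  have hsub : c • S' ⊆ S := by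
    rintro _ ⟨r, hr, rfl⟩
    simpa [smul_eq_mul, mul_comm] using h r hr
  calc sInf S ≤ sInf (c • S') := csInf_le_csInf hS hS'.smul_set hsub
    _ = sInf S' * c := by rw [Real.sInf_smul_of_nonneg hc, smul_eq_mul, mul_comm]

namespace ContinuousMultilinearMap

variable {𝕜 : Type*} [RCLike 𝕜] {ι : Type*} {E : ι → Type*} {F H : Type*}
  [∀ i, NormedAddCommGroup (E i)] [∀ i, NormedSpace 𝕜 (E i)]
  [NormedAddCommGroup F] [NormedSpace 𝕜 F] [NormedAddCommGroup H] [NormedSpace 𝕜 H]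

def IsBoundedThrough (T : ContinuousMultilinearMap 𝕜 E F) (u : H →L[𝕜] F) : Prop :=
  ∀ x : ∀ i, E i, (∀ i, ‖x i‖ ≤ 1) → T x ∈ u '' closedBall 0 1

theorem IsBoundedThrough.curryLeft {n : ℕ} {E : Fin (n + 1) → Type*}
    [∀ i, NormedAddCommGroup (E i)] [∀ i, NormedSpace 𝕜 (E i)]
    {T : ContinuousMultilinearMap 𝕜 E F} {u : H →L[𝕜] F} (hTu : T.IsBoundedThrough u)
    (a : E 0) : (T.curryLeft a).IsBoundedThrough ((‖a‖ : 𝕜) • u) := by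
  intro x hx
  obtain ⟨b, hb, hab⟩ := exists_norm_le_one_eq_norm_smul 𝕜 a
  obtain ⟨y, hy, hyT⟩ := hTu (Fin.cons b x) (Fin.cases hb hx)
  refine ⟨y, hy, ?_⟩
  rw [_root_.smul_apply, hyT, curryLeft_apply, ← cons_smul, ← hab]

end ContinuousMultilinearMap

open ContinuousMultilinearMap in
/-- if `T : E₁ × ⋯ × E_{n+1} → F` is `𝓘`-bounded
(`T(B_{E₁} × ⋯ × B_{E_{n+1}}) ⊆ u(B_H)` for some `u ∈ 𝓘(H;F)`), then for every
`a₁ ∈ E₁` the restricted `n`-linear map `T_{a₁}` is `𝓘`-bounded and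
`‖T_{a₁}‖_{𝓛⟨𝓘⟩} ≤ ‖T‖_{𝓛⟨𝓘⟩} ‖a₁‖`, where `‖·‖_{𝓛⟨𝓘⟩}` is the infimum of `‖u‖_𝓘`
over all witnesses `u`. -/
theorem stmt13 (𝕜 : Type u) [RCLike 𝕜]
    (I : ∀ G F : BanachSp 𝕜, Set (G.carrier →L[𝕜] F.carrier))
    (NI : ∀ G F : BanachSp 𝕜, (G.carrier →L[𝕜] F.carrier) → ℝ)
    (hNI : ∀ (G F : BanachSp 𝕜) (u : G.carrier →L[𝕜] F.carrier), 0 ≤ NI G F u)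
    -- the ideal `𝓘` is closed under scalar multiples, with homogeneous `p`-norm:
    (hIsmul : ∀ (G F : BanachSp 𝕜) (c : 𝕜) (u : G.carrier →L[𝕜] F.carrier),
      u ∈ I G F → c • u ∈ I G F)
    (hNIsmul : ∀ (G F : BanachSp 𝕜) (c : 𝕜) (u : G.carrier →L[𝕜] F.carrier),
      NI G F (c • u) = ‖c‖ * NI G F u)
    {n : ℕ} (E : Fin (n + 1) → Type u) (F : Type u)
    [∀ i, NormedAddCommGroup (E i)] [∀ i, NormedSpace 𝕜 (E i)] [∀ i, CompleteSpace (E i)]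
    [NormedAddCommGroup F] [NormedSpace 𝕜 F] [CompleteSpace F]
    (T : ContinuousMultilinearMap 𝕜 E F)
    (hT : ∃ (H : BanachSp 𝕜), ∃ u ∈ I H (BanachSp.mk F),
      ∀ x : ∀ i, E i, (∀ i, ‖x i‖ ≤ 1) → T x ∈ u '' closedBall 0 1)
    (a : E 0)
    (Tres : ContinuousMultilinearMap 𝕜 (fun i : Fin n => E i.succ) F)
    (hres : ∀ v, Tres v = T (Fin.cons a v)) :
    (∃ (H : BanachSp 𝕜), ∃ u ∈ I H (BanachSp.mk F),
      ∀ x : ∀ i : Fin n, E i.succ, (∀ i, ‖x i‖ ≤ 1) → Tres x ∈ u '' closedBall 0 1) ∧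
    sInf {r : ℝ | ∃ (H : BanachSp 𝕜), ∃ u ∈ I H (BanachSp.mk F),
        (∀ x : ∀ i : Fin n, E i.succ, (∀ i, ‖x i‖ ≤ 1) → Tres x ∈ u '' closedBall 0 1) ∧
        r = NI H (BanachSp.mk F) u} ≤
      sInf {r : ℝ | ∃ (H : BanachSp 𝕜), ∃ u ∈ I H (BanachSp.mk F),
        (∀ x : ∀ i, E i, (∀ i, ‖x i‖ ≤ 1) → T x ∈ u '' closedBall 0 1) ∧
        r = NI H (BanachSp.mk F) u} * ‖a‖ := by
  obtain rfl : Tres = T.curryLeft a := by ext v; simp [hres]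
  obtain ⟨H, u, hu, hTu⟩ := hT
  refine ⟨⟨H, _, hIsmul _ _ _ _ hu, IsBoundedThrough.curryLeft hTu a⟩, ?_⟩
  refine Real.sInf_le_sInf_mul (norm_nonneg a) ⟨0, ?_⟩ ⟨_, H, u, hu, hTu, rfl⟩ ?_
  · rintro _ ⟨H, u, -, -, rfl⟩
    exact hNI _ _ _
  · rintro _ ⟨H, u, hu, hTu, rfl⟩
    refine ⟨H, _, hIsmul _ _ _ _ hu, IsBoundedThrough.curryLeft hTu a, ?_⟩
    rw [hNIsmul, RCLike.norm_ofReal, abs_norm, mul_comm]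
end

section
/- Let 𝓘 be an operator ideal and P : E → F a continuous n-homogeneous polynomial. Then P is 𝓘-bounded (P(B_E) ⊆ u(B_H) for some Banach space H and u ∈ 𝓘(H;F)) if and only if its associated symmetric n-linear map P̌ is 𝓘-bounded (P̌(B_E × ⋯ × B_E) ⊆ v(B_H) for some v ∈ 𝓘(H;F)). Moreover, if P(B_E) ⊆ u(B_H), then P̌(B_E×⋯×B_E) ⊆ (n^n/n!)·u(B_H). -/
open Metric

universe u

/-!
Polarization: for a symmetric `n`-linear `B`, summing `(∏ⱼ εⱼ) • B(z, …, z)` with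
`z = ∑ⱼ εⱼ • xⱼ` over all sign vectors `ε ∈ {±1}ⁿ` gives `2ⁿ n! • B x`. If every `‖xⱼ‖ ≤ 1`,
then `z / n` lies in the unit ball, so `B(z, …, z) = nⁿ P(z / n) ∈ nⁿ • u(B_H)`; as `u(B_H)` is
absolutely convex and the coefficients `2⁻ⁿ ∏ⱼ εⱼ` have absolute values summing to `1`,
`B x ∈ (nⁿ / n!) • u(B_H)`. The converse is immediate from `P x = B(x, …, x)`.
-/

open Finset Function

def boolSign {R : Type*} [Ring R] (b : Bool) : R := if b then 1 else -1

section Polarization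

variable {R : Type*} [CommRing R] {ι : Type*} [Fintype ι] [DecidableEq ι]

lemma sum_boolSign : ∑ b, (boolSign b : R) = 0 := by
  simp [boolSign]

lemma sum_boolSign_sq : ∑ b, (boolSign b : R) ^ 2 = 2 := by
  norm_num [boolSign]

lemma sum_prod_boolSign_mul_prod_boolSign_comp (r : ι → ι) :
    ∑ ε : ι → Bool, (∏ j, (boolSign (ε j) : R)) * ∏ i, boolSign (ε (r i))
      = if Bijective r then 2 ^ Fintype.card ι else 0 := by
  set m : ι → ℕ := fun j => #{i | r i = j}
  have fiberwise (ε : ι → Bool) :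
      ∏ i, (boolSign (ε (r i)) : R) = ∏ j, boolSign (ε j) ^ m j := by
    rw [← prod_fiberwise univ r]
    refine prod_congr rfl fun j _ => ?_
    rw [prod_congr rfl fun i hi => by rw [(mem_filter.1 hi).2], prod_const]
  calc ∑ ε : ι → Bool, (∏ j, (boolSign (ε j) : R)) * ∏ i, boolSign (ε (r i))
      = ∑ ε : ι → Bool, ∏ j, (boolSign (ε j) : R) ^ (m j + 1) := by
        refine sum_congr rfl fun ε _ => ?_
        rw [fiberwise, ← prod_mul_distrib]
        exact prod_congr rfl fun j _ => (pow_succ' _ _).symm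
    _ = ∏ j, ∑ b, (boolSign b : R) ^ (m j + 1) :=
        (Fintype.prod_sum fun j (b : Bool) => (boolSign b : R) ^ (m j + 1)).symm
    -- the factor at `j` is `0` if `j` is not hit by `r`, and `2` if it is hit exactly once
    _ = if Bijective r then 2 ^ Fintype.card ι else 0 := by
        split_ifs with hr
        · have hm (j : ι) : m j = 1 := by
            obtain ⟨i, hi⟩ := hr.2 j
            exact card_eq_one.2 ⟨i, by ext k; simp [← hi, hr.1.eq_iff]⟩
          simp only [hm, sum_boolSign_sq, prod_const, card_univ]
        · obtain ⟨j, hj⟩ : ∃ j, ∀ i, r i ≠ j := by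
            simpa [Surjective] using mt Finite.surjective_iff_bijective.1 hr
          have hm : m j = 0 := card_eq_zero.2 (filter_eq_empty_iff.2 fun i _ => hj i)
          exact prod_eq_zero (mem_univ j) (by simp only [hm, zero_add, pow_one, sum_boolSign])

variable {M N : Type*} [AddCommGroup M] [Module R M] [AddCommGroup N] [Module R N]

lemma MultilinearMap.map_diag_sum_smul (f : MultilinearMap R (fun _ : ι => M) N)
    (c : ι → R) (x : ι → M) :
    f (fun _ => ∑ j, c j • x j) = ∑ r : ι → ι, (∏ i, c (r i)) • f (x ∘ r) := by
  rw [f.map_sum]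
  exact sum_congr rfl fun r _ => f.map_smul_univ _ _

theorem MultilinearMap.polarization (f : MultilinearMap R (fun _ : ι => M) N)
    (hf : ∀ (σ : Equiv.Perm ι) (x : ι → M), f (x ∘ σ) = f x) (x : ι → M) :
    ∑ ε : ι → Bool, (∏ j, (boolSign (ε j) : R)) • f (fun _ => ∑ j, (boolSign (ε j) : R) • x j)
      = ((2 : R) ^ Fintype.card ι * (Fintype.card ι).factorial) • f x := by
  have card_bijective : #{r : ι → ι | Bijective r} = (Fintype.card ι).factorial := by
    rw [← Fintype.card_subtype, Fintype.card_congr Equiv.bijectiveEquiv, Fintype.card_perm]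
  calc ∑ ε : ι → Bool, (∏ j, (boolSign (ε j) : R)) • f (fun _ => ∑ j, (boolSign (ε j) : R) • x j)
      = ∑ r : ι → ι, (∑ ε : ι → Bool,
          (∏ j, (boolSign (ε j) : R)) * ∏ i, boolSign (ε (r i))) • f (x ∘ r) := by
        simp only [f.map_diag_sum_smul, smul_sum, smul_smul, sum_smul]
        exact sum_comm
    _ = ∑ r ∈ {r : ι → ι | Bijective r}, (2 : R) ^ Fintype.card ι • f x := by
        rw [sum_filter]
        refine sum_congr rfl fun r _ => ?_
        rw [sum_prod_boolSign_mul_prod_boolSign_comp]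
        split_ifs with hr
        · exact congrArg _ (hf (Equiv.ofBijective r hr) x)
        · exact zero_smul R _
    _ = _ := by rw [sum_const, card_bijective, ← Nat.cast_smul_eq_nsmul R, smul_smul, mul_comm]

end Polarization

lemma norm_boolSign {𝕜 : Type*} [NormedRing 𝕜] [NormOneClass 𝕜] (b : Bool) :
    ‖(boolSign b : 𝕜)‖ = 1 := by
  cases b <;> simp [boolSign]

lemma ContinuousLinearMap.sum_smul_mem_image_closedBall {𝕜 G F α : Type*} [NormedField 𝕜]
    [SeminormedAddCommGroup G] [NormedSpace 𝕜 G] [SeminormedAddCommGroup F] [NormedSpace 𝕜 F]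
    [Fintype α] (u : G →L[𝕜] F) (a : α → 𝕜) (y : α → F)
    (hy : ∀ k, y k ∈ u '' closedBall 0 1) (ha : ∑ k, ‖a k‖ ≤ 1) :
    ∑ k, a k • y k ∈ u '' closedBall 0 1 := by
  choose h hh hu using hy
  refine ⟨∑ k, a k • h k, mem_closedBall_zero_iff.2 ?_, by simp [hu]⟩
  calc ‖∑ k, a k • h k‖ ≤ ∑ k, ‖a k‖ * ‖h k‖ := norm_sum_le_of_le _ fun k _ => norm_smul_le _ _
    _ ≤ ∑ k, ‖a k‖ := sum_le_sum fun k _ =>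
        mul_le_of_le_one_right (norm_nonneg _) (mem_closedBall_zero_iff.1 (hh k))
    _ ≤ 1 := ha

section NormedSpace

variable {𝕜 E F G ι : Type*} [RCLike 𝕜] [SeminormedAddCommGroup E] [NormedSpace 𝕜 E]
  [SeminormedAddCommGroup F] [NormedSpace 𝕜 F] [SeminormedAddCommGroup G] [NormedSpace 𝕜 G]
  [Fintype ι]

lemma norm_inv_card_smul_sum_le_one (v : ι → E) (hv : ∀ j, ‖v j‖ ≤ 1) :
    ‖(Fintype.card ι : 𝕜)⁻¹ • ∑ j, v j‖ ≤ 1 := by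
  have norm_sum : ‖∑ j, v j‖ ≤ Fintype.card ι := by
    simpa using norm_sum_le_of_le univ fun j _ => hv j
  rw [norm_smul, norm_inv, RCLike.norm_natCast]
  exact inv_mul_le_one_of_le₀ norm_sum (Nat.cast_nonneg _)

lemma MultilinearMap.map_diag_sum_eq_card_pow_smul (f : MultilinearMap 𝕜 (fun _ : ι => E) F)
    (v : ι → E) :
    f (fun _ => ∑ j, v j) = (Fintype.card ι : 𝕜) ^ Fintype.card ι •
      f (fun _ => (Fintype.card ι : 𝕜)⁻¹ • ∑ j, v j) := by
  -- for empty `ι` the sum is `0`, so this holds even though then `(card ι)⁻¹ = 0`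
  have rescale : ∑ j, v j = (Fintype.card ι : 𝕜) • (Fintype.card ι : 𝕜)⁻¹ • ∑ j, v j := by
    rcases isEmpty_or_nonempty ι with hι | hι
    · simp
    · rw [smul_inv_smul₀ (Nat.cast_ne_zero.2 Fintype.card_ne_zero)]
  calc f (fun _ => ∑ j, v j)
      = f (fun _ => (Fintype.card ι : 𝕜) • (Fintype.card ι : 𝕜)⁻¹ • ∑ j, v j) := by
        rw [← rescale]
    _ = _ := by rw [f.map_smul_univ, prod_const, card_univ]

theorem MultilinearMap.mem_smul_image_closedBall_of_diag_mem [DecidableEq ι]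
    (f : MultilinearMap 𝕜 (fun _ : ι => E) F)
    (hf : ∀ (σ : Equiv.Perm ι) (x : ι → E), f (x ∘ σ) = f x) (u : G →L[𝕜] F)
    (hu : ∀ y, ‖y‖ ≤ 1 → f (fun _ => y) ∈ u '' closedBall 0 1)
    (x : ι → E) (hx : ∀ i, ‖x i‖ ≤ 1) :
    f x ∈ (((Fintype.card ι : 𝕜) ^ Fintype.card ι / (Fintype.card ι).factorial) • u) ''
      closedBall 0 1 := by
  set n := Fintype.card ι
  set s : (ι → Bool) → 𝕜 := fun ε => ∏ j, boolSign (ε j)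
  set y : (ι → Bool) → E := fun ε => (n : 𝕜)⁻¹ • ∑ j, (boolSign (ε j) : 𝕜) • x j
  have norm_y (ε) : ‖y ε‖ ≤ 1 :=
    norm_inv_card_smul_sum_le_one _ fun j => by rw [norm_smul, norm_boolSign, one_mul]; exact hx j
  have sum_norm_coeff : ∑ ε : ι → Bool, ‖((2 : 𝕜) ^ n)⁻¹ * s ε‖ = 1 := by
    simp [s, norm_prod, norm_boolSign, n]
  have expansion :
      f x = ((n : 𝕜) ^ n / n.factorial) • ∑ ε, (((2 : 𝕜) ^ n)⁻¹ * s ε) • f (fun _ => y ε) := by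
    have hfac : (n.factorial : 𝕜) ≠ 0 := Nat.cast_ne_zero.2 n.factorial_ne_zero
    have hc : (2 : 𝕜) ^ n * n.factorial ≠ 0 := mul_ne_zero (pow_ne_zero _ two_ne_zero) hfac
    apply smul_right_injective F hc
    dsimp only
    rw [← f.polarization hf x, smul_sum, smul_sum]
    refine sum_congr rfl fun ε _ => ?_
    rw [f.map_diag_sum_eq_card_pow_smul]
    simp only [smul_smul]
    congr 1
    field_simp
    exact mul_comm _ _
  obtain ⟨h, hh, hu_h⟩ := u.sum_smul_mem_image_closedBall _ _ (fun ε => hu _ (norm_y ε))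
    sum_norm_coeff.le
  exact ⟨h, hh, by rw [_root_.smul_apply, hu_h, expansion]⟩

end NormedSpace

theorem stmt15_general (𝕜 : Type u) [RCLike 𝕜]
    (I : ∀ G F : BanachSp 𝕜, Set (G.carrier →L[𝕜] F.carrier))
    (hIsmul : ∀ (G F : BanachSp 𝕜) (c : 𝕜) (u : G.carrier →L[𝕜] F.carrier),
      u ∈ I G F → c • u ∈ I G F)
    (n : ℕ) (E F : Type u)
    [NormedAddCommGroup E] [NormedSpace 𝕜 E]
    [NormedAddCommGroup F] [NormedSpace 𝕜 F] [CompleteSpace F]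
    (B : ContinuousMultilinearMap 𝕜 (fun _ : Fin n => E) F)
    (hBsym : ∀ (σ : Equiv.Perm (Fin n)) (v : Fin n → E), B (fun i => v (σ i)) = B v)
    (P : E → F) (hP : ∀ x : E, P x = B (fun _ => x)) :
    ((∃ (H : BanachSp 𝕜), ∃ u ∈ I H (BanachSp.mk F),
        ∀ x : E, ‖x‖ ≤ 1 → P x ∈ u '' closedBall 0 1) ↔
      (∃ (H : BanachSp 𝕜), ∃ v ∈ I H (BanachSp.mk F),
        ∀ x : Fin n → E, (∀ i, ‖x i‖ ≤ 1) → B x ∈ v '' closedBall 0 1)) ∧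
    (∀ (H : BanachSp 𝕜) (u : H.carrier →L[𝕜] F), u ∈ I H (BanachSp.mk F) →
      (∀ x : E, ‖x‖ ≤ 1 → P x ∈ u '' closedBall 0 1) →
      ∀ x : Fin n → E, (∀ i, ‖x i‖ ≤ 1) →
        B x ∈ (((n : 𝕜) ^ n / (n.factorial : 𝕜)) • u) '' closedBall 0 1) := by
  have bound (H : BanachSp 𝕜) (u : H.carrier →L[𝕜] F)
      (hPu : ∀ x : E, ‖x‖ ≤ 1 → P x ∈ u '' closedBall 0 1) (x : Fin n → E)
      (hx : ∀ i, ‖x i‖ ≤ 1) :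
      B x ∈ (((n : 𝕜) ^ n / (n.factorial : 𝕜)) • u) '' closedBall 0 1 := by
    have := B.toMultilinearMap.mem_smul_image_closedBall_of_diag_mem (fun σ v => hBsym σ v) u
      (fun y hy => hP y ▸ hPu y hy) x hx
    rwa [Fintype.card_fin] at this
  refine ⟨⟨?_, ?_⟩, fun H u _ hPu => bound H u hPu⟩
  · rintro ⟨H, u, hu, hPu⟩
    exact ⟨H, _, hIsmul _ _ _ u hu, bound H u hPu⟩
  · rintro ⟨H, v, hv, hBv⟩
    exact ⟨H, v, hv, fun x hx => hP x ▸ hBv _ fun _ => hx⟩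

/-- a continuous `n`-homogeneous polynomial `P` (with associated symmetric
`n`-linear map `P̌ = B`, so `P x = B(x,…,x)`) is `𝓘`-bounded iff `P̌` is `𝓘`-bounded.
Moreover, if `P(B_E) ⊆ u(B_H)` then `P̌(B_E × ⋯ × B_E) ⊆ (nⁿ/n!)·u(B_H)`. -/
theorem stmt15 (𝕜 : Type u) [RCLike 𝕜]
    (I : ∀ G F : BanachSp 𝕜, Set (G.carrier →L[𝕜] F.carrier))
    (hIsmul : ∀ (G F : BanachSp 𝕜) (c : 𝕜) (u : G.carrier →L[𝕜] F.carrier),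
      u ∈ I G F → c • u ∈ I G F)
    (n : ℕ) (hn : 0 < n) (E F : Type u)
    [NormedAddCommGroup E] [NormedSpace 𝕜 E] [CompleteSpace E]
    [NormedAddCommGroup F] [NormedSpace 𝕜 F] [CompleteSpace F]
    (B : ContinuousMultilinearMap 𝕜 (fun _ : Fin n => E) F)
    (hBsym : ∀ (σ : Equiv.Perm (Fin n)) (v : Fin n → E), B (fun i => v (σ i)) = B v)
    (P : E → F) (hP : ∀ x : E, P x = B (fun _ => x)) :
    ((∃ (H : BanachSp 𝕜), ∃ u ∈ I H (BanachSp.mk F),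
        ∀ x : E, ‖x‖ ≤ 1 → P x ∈ u '' closedBall 0 1) ↔
      (∃ (H : BanachSp 𝕜), ∃ v ∈ I H (BanachSp.mk F),
        ∀ x : Fin n → E, (∀ i, ‖x i‖ ≤ 1) → B x ∈ v '' closedBall 0 1)) ∧
    (∀ (H : BanachSp 𝕜) (u : H.carrier →L[𝕜] F), u ∈ I H (BanachSp.mk F) →
      (∀ x : E, ‖x‖ ≤ 1 → P x ∈ u '' closedBall 0 1) →
      ∀ x : Fin n → E, (∀ i, ‖x i‖ ≤ 1) →
        B x ∈ (((n : 𝕜) ^ n / (n.factorial : 𝕜)) • u) '' closedBall 0 1) :=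
  stmt15_general 𝕜 I hIsmul n E F B hBsym P hP
end

section
/- Let 𝓗 be a strongly symmetric normed multilinear hyper-ideal. Then 𝓟^𝓗 = 𝓟_𝓗 isometrically: for each n-homogeneous polynomial P, P has some associated multilinear map in 𝓗 iff P̌ ∈ 𝓗, and inf{‖A‖_𝓗 : Â = P, A ∈ 𝓗} = ‖P̌‖_𝓗. -/
open Finset

private lemma count_aux (n : ℕ) (r : Fin n → Fin n) :
    (∑ s : Finset (Fin n), if (∀ i, r i ∈ s) then ((-1:ℤ) ^ (n - s.card)) else 0)
      = if Function.Bijective r then 1 else 0 := by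
  classical
  set t := Finset.image r Finset.univ with ht
  have hc : ∀ s : Finset (Fin n), (∀ i, r i ∈ s) ↔ t ⊆ s := by
    intro s; simp [ht, Finset.image_subset_iff]
  have h1 : (∑ s : Finset (Fin n), if (∀ i, r i ∈ s) then ((-1:ℤ) ^ (n - s.card)) else 0)
      = ∑ u : Finset (Fin n), if u ⊆ tᶜ then ((-1:ℤ) ^ u.card) else 0 := by
    refine Fintype.sum_bijective compl (Function.Involutive.bijective compl_compl) _ _ ?_
    intro s
    have h2 : (∀ i, r i ∈ s) ↔ sᶜ ⊆ tᶜ := by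
      rw [hc, Finset.subset_compl_comm, compl_compl]
    have h3 : n - s.card = sᶜ.card := by
      rw [Finset.card_compl, Fintype.card_fin]
    rw [if_congr h2 rfl rfl, h3]
  rw [h1]
  have h4 : (∑ u : Finset (Fin n), if u ⊆ tᶜ then ((-1:ℤ) ^ u.card) else 0)
      = ∑ u ∈ tᶜ.powerset, (-1:ℤ) ^ u.card := by
    rw [← Finset.sum_filter]
    congr 1
    ext u; simp
  rw [h4, Finset.sum_powerset_neg_one_pow_card]
  congr 1
  rw [eq_iff_iff]
  constructor
  · intro h
    have : t = Finset.univ := by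
      rwa [← Finset.compl_eq_empty_iff]
    rw [← Finite.surjective_iff_bijective]
    intro y
    have := Finset.eq_univ_iff_forall.mp this y
    simpa [ht] using this
  · intro h
    rw [Finset.compl_eq_empty_iff]
    apply Finset.eq_univ_iff_forall.mpr
    intro y
    simpa [ht] using h.surjective y

private lemma polar {𝕜 E F : Type*} [RCLike 𝕜]
    [NormedAddCommGroup E] [NormedSpace 𝕜 E]
    [NormedAddCommGroup F] [NormedSpace 𝕜 F] (n : ℕ) (f : ContinuousMultilinearMap 𝕜 (fun _ : Fin n => E) F) (x : Fin n → E) :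
    ∑ σ : Equiv.Perm (Fin n), f (fun i => x (σ i)) =
    ∑ s : Finset (Fin n), (-1 : ℤ) ^ (n - s.card) • f (fun _ => ∑ j ∈ s, x j) := by
  classical
  have h1 : ∀ s : Finset (Fin n), f (fun _ => ∑ j ∈ s, x j)
      = ∑ r ∈ Fintype.piFinset (fun _ : Fin n => s), f (fun i => x (r i)) :=
    fun s => f.map_sum_finset (fun _ j => x j) (fun _ => s)
  have h2 : ∀ s : Finset (Fin n),
      Fintype.piFinset (fun _ : Fin n => s) = univ.filter (fun r : Fin n → Fin n => ∀ i, r i ∈ s) := by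
    intro s; ext r; simp [Fintype.mem_piFinset]
  calc ∑ σ : Equiv.Perm (Fin n), f (fun i => x (σ i))
      = ∑ r ∈ univ.filter (fun r : Fin n → Fin n => Function.Bijective r), f (fun i => x (r i)) := by
        refine Finset.sum_bij (fun σ _ => ⇑σ) ?_ ?_ ?_ ?_
        · intro σ _; simp only [mem_filter, mem_univ, true_and]; exact σ.bijective
        · intro a _ b _ h; exact Equiv.coe_fn_injective h
        · intro r hr
          simp only [mem_filter, mem_univ, true_and] at hr
          exact ⟨Equiv.ofBijective r hr, mem_univ _, rfl⟩
        · intro σ _; rfl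
    _ = ∑ r : Fin n → Fin n, (if Function.Bijective r then (1:ℤ) else 0) • f (fun i => x (r i)) := by
        rw [Finset.sum_filter]
        simp [ite_smul]
    _ = ∑ r : Fin n → Fin n, (∑ s : Finset (Fin n), if (∀ i, r i ∈ s) then ((-1:ℤ) ^ (n - s.card)) else 0) • f (fun i => x (r i)) := by
        simp_rw [count_aux]
    _ = ∑ r : Fin n → Fin n, ∑ s : Finset (Fin n), (if (∀ i, r i ∈ s) then ((-1:ℤ) ^ (n - s.card)) • f (fun i => x (r i)) else 0) := by
        simp_rw [Finset.sum_smul, ite_smul, zero_smul]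
    _ = ∑ s : Finset (Fin n), ∑ r : Fin n → Fin n, (if (∀ i, r i ∈ s) then ((-1:ℤ) ^ (n - s.card)) • f (fun i => x (r i)) else 0) :=
        Finset.sum_comm
    _ = ∑ s : Finset (Fin n), (-1 : ℤ) ^ (n - s.card) • f (fun _ => ∑ j ∈ s, x j) := by
        refine Finset.sum_congr rfl fun s _ => ?_
        rw [h1 s, h2 s, Finset.smul_sum, Finset.sum_filter]

/-- let `𝓗` be a strongly symmetric normed multilinear hyper-ideal (its
component at `(^nE;F)` being the normed linear subspace `S` with norm `N`, closed under
permutations with equal norm). Then `𝓟^𝓗 = 𝓟_𝓗` isometrically: an `n`-homogeneous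
polynomial `P` (with symmetric associated map `Psym = P̌`) admits some associated
multilinear map in `𝓗` iff `P̌ ∈ 𝓗`, and in that case
`inf {‖A‖_𝓗 : A ∈ 𝓗, Â = P} = ‖P̌‖_𝓗`. -/

theorem stmt18 {𝕜 E F : Type*} [RCLike 𝕜]
    [NormedAddCommGroup E] [NormedSpace 𝕜 E] [CompleteSpace E]
    [NormedAddCommGroup F] [NormedSpace 𝕜 F] [CompleteSpace F]
    (n : ℕ)
    (S : Set (ContinuousMultilinearMap 𝕜 (fun _ : Fin n => E) F))
    (N : ContinuousMultilinearMap 𝕜 (fun _ : Fin n => E) F → ℝ)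
    (hNnonneg : ∀ A, 0 ≤ N A)
    (hadd : ∀ A B, A ∈ S → B ∈ S → A + B ∈ S)
    (hsmulmem : ∀ (c : 𝕜) A, A ∈ S → c • A ∈ S)
    (htri : ∀ A B, A ∈ S → B ∈ S → N (A + B) ≤ N A + N B)
    (hsmul : ∀ (c : 𝕜) A, N (c • A) = ‖c‖ * N A)
    -- strong symmetry:
    (hsymm : ∀ (σ : Equiv.Perm (Fin n)) A, A ∈ S →
      A.domDomCongr σ ∈ S ∧ N (A.domDomCongr σ) = N A)
    (Psym : ContinuousMultilinearMap 𝕜 (fun _ : Fin n => E) F)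
    (hPsym : ∀ (σ : Equiv.Perm (Fin n)) (v : Fin n → E), Psym (fun i => v (σ i)) = Psym v) :
    ((∃ A ∈ S, ∀ x : E, A (fun _ => x) = Psym (fun _ => x)) ↔ Psym ∈ S) ∧
    (Psym ∈ S →
      sInf {r : ℝ | ∃ A ∈ S, (∀ x : E, A (fun _ => x) = Psym (fun _ => x)) ∧ r = N A}
        = N Psym) := by
  classical
  have hfac : ((n.factorial : 𝕜)) ≠ 0 := Nat.cast_ne_zero.mpr (Nat.factorial_ne_zero n)
  -- key: Psym is the symmetrization of any A agreeing on the diagonal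
  have key : ∀ A : ContinuousMultilinearMap 𝕜 (fun _ : Fin n => E) F,
      (∀ x : E, A (fun _ => x) = Psym (fun _ => x)) →
      Psym = ((n.factorial : 𝕜)⁻¹) • ∑ σ : Equiv.Perm (Fin n), A.domDomCongr σ := by
    intro A hA
    have hsum : ∀ x : Fin n → E,
        (∑ σ : Equiv.Perm (Fin n), A (fun i => x (σ i))) = (n.factorial) • Psym x := by
      intro x
      rw [polar n A x]
      have hd : ∀ s : Finset (Fin n),
          A (fun _ => ∑ j ∈ s, x j) = Psym (fun _ => ∑ j ∈ s, x j) := fun s => hA _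
      simp_rw [hd]
      rw [← polar n Psym x]
      have : ∀ σ : Equiv.Perm (Fin n), Psym (fun i => x (σ i)) = Psym x :=
        fun σ => hPsym σ x
      simp_rw [this]
      rw [Finset.sum_const, Finset.card_univ, Fintype.card_perm, Fintype.card_fin]
    ext x
    have happ : (∑ σ : Equiv.Perm (Fin n), A.domDomCongr σ) x
        = ∑ σ : Equiv.Perm (Fin n), A (fun i => x (σ i)) := by
      simp [ContinuousMultilinearMap.domDomCongr_apply]
    rw [ContinuousMultilinearMap.smul_apply, happ, hsum, ← Nat.cast_smul_eq_nsmul 𝕜,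
      smul_smul, inv_mul_cancel₀ hfac, one_smul]
  -- membership and norm bound for the symmetrization
  have hmain : ∀ A ∈ S, (∀ x : E, A (fun _ => x) = Psym (fun _ => x)) →
      Psym ∈ S ∧ N Psym ≤ N A := by
    intro A hAS hA
    have h0 : (0 : ContinuousMultilinearMap 𝕜 (fun _ : Fin n => E) F) ∈ S := by
      have := hsmulmem 0 A hAS
      rwa [zero_smul] at this
    have hN0 : N 0 = 0 := by
      have := hsmul 0 A
      rwa [zero_smul, norm_zero, zero_mul] at this
    -- partial sums: membership and triangle inequality together
    have hsums : ∀ t : Finset (Equiv.Perm (Fin n)),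
        (∑ σ ∈ t, A.domDomCongr σ) ∈ S ∧
        N (∑ σ ∈ t, A.domDomCongr σ) ≤ ∑ σ ∈ t, N (A.domDomCongr σ) := by
      intro t
      induction t using Finset.cons_induction with
      | empty => simpa [hN0] using h0
      | cons a t ha ih =>
        rw [Finset.sum_cons, Finset.sum_cons]
        have haS := (hsymm a A hAS).1
        refine ⟨hadd _ _ haS ih.1, ?_⟩
        exact (htri _ _ haS ih.1).trans (by linarith [ih.2])
    have hPS : Psym ∈ S := by
      rw [key A hA]
      exact hsmulmem _ _ (hsums Finset.univ).1
    refine ⟨hPS, ?_⟩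
    have hNsum : N (∑ σ : Equiv.Perm (Fin n), A.domDomCongr σ) ≤ (n.factorial : ℝ) * N A := by
      refine (hsums Finset.univ).2.trans ?_
      have : ∀ σ : Equiv.Perm (Fin n), N (A.domDomCongr σ) = N A :=
        fun σ => (hsymm σ A hAS).2
      simp_rw [this]
      rw [Finset.sum_const, Finset.card_univ, Fintype.card_perm, Fintype.card_fin,
        nsmul_eq_mul]
    have hnorm : ‖((n.factorial : 𝕜))⁻¹‖ = ((n.factorial : ℝ))⁻¹ := by
      rw [norm_inv, RCLike.norm_natCast]
    calc N Psym = ‖((n.factorial : 𝕜))⁻¹‖ * N (∑ σ : Equiv.Perm (Fin n), A.domDomCongr σ) := by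
          rw [key A hA, hsmul]
      _ ≤ ((n.factorial : ℝ))⁻¹ * ((n.factorial : ℝ) * N A) := by
          rw [hnorm]
          exact mul_le_mul_of_nonneg_left hNsum (by positivity)
      _ = N A := by
          rw [← mul_assoc, inv_mul_cancel₀ (by positivity), one_mul]
  constructor
  · constructor
    · rintro ⟨A, hAS, hA⟩
      exact (hmain A hAS hA).1
    · intro hPS
      exact ⟨Psym, hPS, fun _ => rfl⟩
  · intro hPS
    apply le_antisymm
    · exact csInf_le ⟨N Psym, fun r ⟨A, hAS, hA, hr⟩ => hr ▸ (hmain A hAS hA).2⟩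
        ⟨Psym, hPS, fun _ => rfl, rfl⟩
    · exact le_csInf ⟨N Psym, Psym, hPS, fun _ => rfl, rfl⟩
        (fun r ⟨A, hAS, hA, hr⟩ => hr ▸ (hmain A hAS hA).2)
end
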